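/- arXiv:1610.09737 — 12 statements merged into one kernel-verified Lean document; each statement's English description precedes it below -/
import Mathlib

section
/- For non-negative integers m ≥ n, the sum over k from 0 to n of (m - 2k)·C(m,k)^3 equals (m - n)·C(m,n) times the sum over j from 0 to m-n-1 of C(n+j,n)·C(n+j,m-n-1). -/
open Finset

-- absorption: (q+1)*C(i,q+1) = (i-q)*C(i,q) over ℤ, all i
lemma e1 (q i : ℕ) : ((q : ℤ) + 1) * (i.choose (q + 1) : ℤ) = ((i : ℤ) - q) * (i.choose q : ℤ) := by
  rcases lt_or_ge i q with hlt | hge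
  · rw [Nat.choose_eq_zero_of_lt hlt, Nat.choose_eq_zero_of_lt (hlt.trans q.lt_succ_self)]
    ring
  · have h := Nat.choose_succ_right_eq i q
    have h2 : ((i - q : ℕ) : ℤ) = (i : ℤ) - q := by
      exact_mod_cast Int.ofNat_sub hge
    have h3 : ((i.choose (q+1) * (q+1) : ℕ) : ℤ) = ((i.choose q * (i - q) : ℕ) : ℤ) := by
      exact_mod_cast congrArg (fun x : ℕ => (x : ℤ)) h
    push_cast at h3
    rw [h2] at h3
    linarith

-- upper absorption: (i+1-b)*C(i+1,b) = (i+1)*C(i,b) over ℤ, all i b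
lemma e3 (b i : ℕ) : ((i : ℤ) + 1 - b) * ((i + 1).choose b : ℤ) = ((i : ℤ) + 1) * (i.choose b : ℤ) := by
  rcases lt_or_ge (i + 1) b with hlt | hge
  · rw [Nat.choose_eq_zero_of_lt hlt, Nat.choose_eq_zero_of_lt (Nat.lt_of_succ_lt hlt)]
    ring
  · have h1 := Nat.choose_succ_right_eq (i + 1) b
    have h2 := Nat.add_one_mul_choose_eq i b
    have hc1 : (((i+1).choose (b+1) * (b+1) : ℕ) : ℤ) = ((i+1).choose b : ℤ) * (((i+1) - b : ℕ) : ℤ) := by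
      exact_mod_cast congrArg (fun x : ℕ => (x : ℤ)) h1
    have hc2 : ((i+1 : ℕ) : ℤ) * (i.choose b : ℤ) = (((i+1).choose (b+1) * (b+1) : ℕ) : ℤ) := by
      exact_mod_cast congrArg (fun x : ℕ => (x : ℤ)) h2
    have h3 : (((i+1) - b : ℕ) : ℤ) = (i : ℤ) + 1 - b := by
      exact_mod_cast Int.ofNat_sub hge
    rw [h3] at hc1
    push_cast at hc1 hc2
    linarith

-- per-term certificate identity
lemma qlem (q b i : ℕ) :
    ((b : ℤ) + 1) * (((b : ℤ) + 1) * (i.choose (q+1) : ℤ) * (i.choose b : ℤ)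
        - ((q : ℤ) + 1) * (i.choose q : ℤ) * (i.choose (b+1) : ℤ))
    = ((b : ℤ) - q) *
        (((i : ℤ) + 1 - b) * ((i+1).choose (q+1) : ℤ) * ((i+1).choose b : ℤ)
          - ((i : ℤ) - b) * (i.choose (q+1) : ℤ) * (i.choose b : ℤ)) := by
  have h1 := e1 q i
  have h2 := e1 b i
  have h3 := e3 b i
  have h4 : ((i+1).choose (q+1) : ℤ) = (i.choose q : ℤ) + (i.choose (q+1) : ℤ) := by
    exact_mod_cast congrArg (fun x : ℕ => (x : ℤ)) (Nat.choose_succ_succ i q)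
  linear_combination ((b : ℤ) + 1) * (i.choose b : ℤ) * h1
    - ((q : ℤ) + 1) * (i.choose q : ℤ) * h2
    - ((b : ℤ) - q) * ((i+1).choose (q+1) : ℤ) * h3
    - ((b : ℤ) - q) * ((i : ℤ) + 1) * (i.choose b : ℤ) * h4

lemma s1 (s : ℕ) : ∑ i ∈ range (s + 1), (i.choose s : ℤ) = 1 := by
  rw [Finset.sum_range_succ, Nat.choose_self]
  have : ∑ i ∈ range s, (i.choose s : ℤ) = 0 := by
    apply Finset.sum_eq_zero
    intro i hi
    rw [Nat.choose_eq_zero_of_lt (mem_range.mp hi)]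
    simp
  rw [this]; simp

lemma conv (m n : ℕ) (h : n ≤ m) :
    ∑ j ∈ range (m - n), ((n + j).choose n : ℤ) * ((n + j).choose (m - n - 1) : ℤ)
      = ∑ i ∈ range m, (i.choose n : ℤ) * (i.choose (m - n - 1) : ℤ) := by
  have hsplit : ∑ i ∈ Ico 0 n, (i.choose n : ℤ) * (i.choose (m - n - 1) : ℤ)
      + ∑ i ∈ Ico n m, (i.choose n : ℤ) * (i.choose (m - n - 1) : ℤ)
      = ∑ i ∈ Ico 0 m, (i.choose n : ℤ) * (i.choose (m - n - 1) : ℤ) :=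
    Finset.sum_Ico_consecutive _ (Nat.zero_le n) h
  have hz : ∑ i ∈ Ico 0 n, (i.choose n : ℤ) * (i.choose (m - n - 1) : ℤ) = 0 := by
    apply Finset.sum_eq_zero
    intro i hi
    rw [Nat.choose_eq_zero_of_lt (mem_Ico.mp hi).2]
    simp
  conv_rhs => rw [range_eq_Ico]
  rw [← hsplit, hz, zero_add, Finset.sum_Ico_eq_sum_range]

lemma step (m n : ℕ) (h : n + 1 ≤ m) :
    ((m : ℤ) - (n + 1)) * (m.choose (n + 1) : ℤ) *
        (∑ i ∈ range m, (i.choose (n + 1) : ℤ) * (i.choose (m - (n + 1) - 1) : ℤ))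
      = ((m : ℤ) - n) * (m.choose n : ℤ) *
          (∑ i ∈ range m, (i.choose n : ℤ) * (i.choose (m - n - 1) : ℤ))
        + ((m : ℤ) - 2 * ((n : ℤ) + 1)) * (m.choose (n + 1) : ℤ) ^ 3 := by
  rcases Nat.lt_or_ge (n + 1) m with hlt | hge
  · -- m = n + 1 + (b + 1)
    obtain ⟨a, ha⟩ := Nat.exists_eq_add_of_le hlt.le
    obtain ⟨b, rfl⟩ : ∃ b, a = b + 1 := by
      rcases a with _ | b
      · omega
      · exact ⟨b, rfl⟩
    have hidx1 : m - (n + 1) - 1 = b := by omega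
    have hidx2 : m - n - 1 = b + 1 := by omega
    rw [hidx1, hidx2]
    have hb1 : ((b : ℤ) + 1) ≠ 0 := by positivity
    apply mul_left_cancel₀ hb1
    have habs := e1 n m
    have hmcast : ((m : ℤ)) = (n : ℤ) + 1 + ((b : ℤ) + 1) := by
      rw [ha]; push_cast; ring
    have h1 : (m : ℤ) - b = (n : ℤ) + 2 := by rw [hmcast]; ring
    have h2 : (m : ℤ) - ((n : ℤ) + 1) = (b : ℤ) + 1 := by rw [hmcast]; ring
    have h3 : (m : ℤ) - 2 * ((n : ℤ) + 1) = (b : ℤ) - n := by rw [hmcast]; ring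
    -- telescoping sum
    have htel : ∑ i ∈ range m,
        (((b : ℤ) - n) * ((i : ℤ) + 1 - b) * ((i+1).choose (n+1) : ℤ) * ((i+1).choose b : ℤ)
          - ((b : ℤ) - n) * ((i : ℤ) - b) * (i.choose (n+1) : ℤ) * (i.choose b : ℤ))
        = ((b : ℤ) - n) * ((m : ℤ) - b) * (m.choose (n+1) : ℤ) * (m.choose b : ℤ) := by
      have h0 := Finset.sum_range_sub
        (fun i : ℕ => ((b : ℤ) - n) * ((i : ℤ) - b) * (i.choose (n+1) : ℤ) * (i.choose b : ℤ)) m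
      beta_reduce at h0
      have hL : ∑ i ∈ range m,
          (((b : ℤ) - n) * ((i : ℤ) + 1 - b) * ((i+1).choose (n+1) : ℤ) * ((i+1).choose b : ℤ)
            - ((b : ℤ) - n) * ((i : ℤ) - b) * (i.choose (n+1) : ℤ) * (i.choose b : ℤ))
          = ∑ i ∈ range m,
          (((b : ℤ) - n) * (((i+1 : ℕ) : ℤ) - b) * ((i+1).choose (n+1) : ℤ) * ((i+1).choose b : ℤ)
            - ((b : ℤ) - n) * ((i : ℤ) - b) * (i.choose (n+1) : ℤ) * (i.choose b : ℤ)) := by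
        apply Finset.sum_congr rfl
        intro i _
        push_cast
        ring
      rw [hL, h0]
      have hz : ((0:ℕ).choose (n+1) : ℤ) = 0 := by simp
      rw [hz]
      push_cast
      ring
    have hsymm : (m.choose b : ℤ) = (m.choose (n+2) : ℤ) := by
      have hmb : m - (n + 2) = b := by omega
      rw [← hmb, Nat.choose_symm (by omega : n + 2 ≤ m)]
    have habs2 : ((n : ℤ) + 2) * (m.choose (n+2) : ℤ)
        = ((b : ℤ) + 1) * (m.choose (n+1) : ℤ) := by
      have he := e1 (n+1) m
      push_cast at he
      rw [h2] at he
      linarith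
    calc ((b : ℤ) + 1) * (((m : ℤ) - (n + 1)) * (m.choose (n + 1) : ℤ) *
            ∑ i ∈ range m, (i.choose (n + 1) : ℤ) * (i.choose b : ℤ))
        = ∑ i ∈ range m, (m.choose (n+1) : ℤ) *
            (((b : ℤ) + 1) * (((b : ℤ) + 1) * (i.choose (n+1) : ℤ) * (i.choose b : ℤ)
              - ((n : ℤ) + 1) * (i.choose n : ℤ) * (i.choose (b+1) : ℤ)))
          + ((b : ℤ) + 1) * (((m : ℤ) - n) * (m.choose n : ℤ) *
            ∑ i ∈ range m, (i.choose n : ℤ) * (i.choose (b + 1) : ℤ)) := by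
          simp only [Finset.mul_sum]
          rw [← Finset.sum_add_distrib]
          apply Finset.sum_congr rfl
          intro i _
          linear_combination (((b : ℤ) + 1) * (i.choose n : ℤ) * (i.choose (b+1) : ℤ)) * habs
            + (((b:ℤ)+1) * (m.choose (n+1) : ℤ) * (i.choose (n+1) : ℤ) * (i.choose b : ℤ)) * h2
      _ = ((b : ℤ) - n) * ((m : ℤ) - b) * (m.choose (n+1) : ℤ)^2 * (m.choose b : ℤ)
          + ((b : ℤ) + 1) * (((m : ℤ) - n) * (m.choose n : ℤ) *
            ∑ i ∈ range m, (i.choose n : ℤ) * (i.choose (b + 1) : ℤ)) := by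
          congr 1
          have hq : ∀ i ∈ range m,
              (m.choose (n+1) : ℤ) *
                (((b : ℤ) + 1) * (((b : ℤ) + 1) * (i.choose (n+1) : ℤ) * (i.choose b : ℤ)
                  - ((n : ℤ) + 1) * (i.choose n : ℤ) * (i.choose (b+1) : ℤ)))
              = (m.choose (n+1) : ℤ) *
                (((b : ℤ) - n) * ((i : ℤ) + 1 - b) * ((i+1).choose (n+1) : ℤ) * ((i+1).choose b : ℤ)
                  - ((b : ℤ) - n) * ((i : ℤ) - b) * (i.choose (n+1) : ℤ) * (i.choose b : ℤ)) := by
            intro i _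
            have hql := qlem n b i
            linear_combination (m.choose (n+1) : ℤ) * hql
          rw [Finset.sum_congr rfl hq, ← Finset.mul_sum]
          have htel2 : ∑ i ∈ range m,
              (((b : ℤ) - n) * ((i : ℤ) + 1 - b) * ((i+1).choose (n+1) : ℤ) * ((i+1).choose b : ℤ)
                - ((b : ℤ) - n) * ((i : ℤ) - b) * (i.choose (n+1) : ℤ) * (i.choose b : ℤ))
              = ((b : ℤ) - n) * ((m : ℤ) - b) * (m.choose (n+1) : ℤ) * (m.choose b : ℤ) := htel
          rw [htel2]
          ring
      _ = ((b : ℤ) + 1) * (((m : ℤ) - n) * (m.choose n : ℤ) *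
            ∑ i ∈ range m, (i.choose n : ℤ) * (i.choose (b + 1) : ℤ)
          + ((m : ℤ) - 2 * ((n : ℤ) + 1)) * (m.choose (n + 1) : ℤ) ^ 3) := by
          rw [hsymm, h1, h3]
          linear_combination (((b:ℤ) - n) * (m.choose (n+1) : ℤ)^2) * habs2
  · -- m = n + 1
    have hm : m = n + 1 := le_antisymm hge h
    subst hm
    have hz1 : (n + 1 : ℕ) - (n + 1) - 1 = 0 := by omega
    have hz2 : (n + 1 : ℕ) - n - 1 = 0 := by omega
    rw [hz1, hz2]
    have hs : ∑ i ∈ range (n+1), (i.choose (n+1) : ℤ) * (i.choose 0 : ℤ) = 0 := by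
      apply Finset.sum_eq_zero
      intro i hi
      rw [Nat.choose_eq_zero_of_lt (mem_range.mp hi)]
      ring
    have hs2 : ∑ i ∈ range (n+1), (i.choose n : ℤ) * (i.choose 0 : ℤ) = 1 := by
      have hcongr : ∀ i ∈ range (n+1), (i.choose n : ℤ) * (i.choose 0 : ℤ) = (i.choose n : ℤ) := by
        intro i _; simp
      rw [Finset.sum_congr rfl hcongr, s1 n]
    rw [hs, hs2, Nat.choose_self, Nat.choose_succ_self_right]
    push_cast
    ring

theorem stmt_0 (m n : ℕ) (h : n ≤ m) :
    ∑ k ∈ range (n + 1), ((m : ℤ) - 2 * k) * (m.choose k : ℤ) ^ 3 =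
      ((m : ℤ) - n) * (m.choose n : ℤ) *
        ∑ j ∈ range (m - n), ((n + j).choose n : ℤ) * ((n + j).choose (m - n - 1) : ℤ) := by
  induction n with
  | zero =>
      rw [conv m 0 (Nat.zero_le m)]
      rcases m with _ | s
      · simp
      · rw [Finset.sum_range_one]
        have hidx : (s + 1) - 0 - 1 = s := by omega
        rw [hidx]
        have hs2 : ∑ i ∈ range (s+1), (i.choose 0 : ℤ) * (i.choose s : ℤ) = 1 := by
          have hcongr : ∀ i ∈ range (s+1),
              (i.choose 0 : ℤ) * (i.choose s : ℤ) = (i.choose s : ℤ) := by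
            intro i _; simp
          rw [Finset.sum_congr rfl hcongr, s1 s]
        rw [hs2]
        simp
  | succ n ih =>
      rw [conv m (n+1) h, Finset.sum_range_succ, ih (by omega), conv m n (by omega)]
      have hstep := step m n h
      push_cast
      push_cast at hstep
      linarith
end

section
/- For non-negative integers r, s, and m ≥ n, the sum over k from 0 to n of (m-2k)·multinomial(m+r+s; m,r,s)·C(m,k)·C(m+2r,k+r)·C(m+2s,k+s) / (C(m+2r,m+r)·C(m+2s,m+s)·C(m+s,n+s)) equals (m-n) times the sum over j from 0 to m-n+r-1 of C(n+j,n)·C(n+j+s,m-n+s-1). -/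
open Finset

/-- Binomial coefficient with integer arguments, zero outside `0 ≤ k ≤ n`. -/
def C (n k : ℤ) : ℤ := if 0 ≤ k ∧ k ≤ n then (n.toNat.choose k.toNat : ℤ) else 0

lemma C_natCast (a b : ℕ) : C (a : ℤ) (b : ℤ) = (a.choose b : ℤ) := by
  unfold C
  by_cases h : (b : ℤ) ≤ (a : ℤ)
  · simp [h]
  · have hb : a < b := by exact_mod_cast not_le.mp h
    simp [h, Nat.choose_eq_zero_of_lt hb]

lemma C_neg (a b : ℤ) (hb : b < 0) : C a b = 0 := by
  unfold C; simp [hb.not_ge]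

noncomputable def Uq (m r s k : ℕ) : ℚ :=
  ((m+r+s).factorial * (m+r).factorial * (m+s).factorial : ℚ) /
    (k.factorial * (m-k).factorial * (k+r).factorial * (m-k+r).factorial *
     (k+s).factorial * (m-k+s).factorial)

lemma fne (n : ℕ) : ((n.factorial : ℕ) : ℚ) ≠ 0 := by
  exact_mod_cast n.factorial_ne_zero

lemma claimA (m r s k : ℕ) (hk : k ≤ m) :
    ((m+r+s).factorial : ℚ) / ((m.factorial : ℚ) * (r.factorial : ℚ) * (s.factorial : ℚ)) *
      (m.choose k : ℚ) * ((m+2*r).choose (k+r) : ℚ) * ((m+2*s).choose (k+s) : ℚ)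
    = Uq m r s k * ((m+2*r).choose (m+r) : ℚ) * ((m+2*s).choose (m+s) : ℚ) := by
  rw [Nat.cast_choose ℚ hk, Nat.cast_choose ℚ (show k+r ≤ m+2*r by omega),
    Nat.cast_choose ℚ (show k+s ≤ m+2*s by omega),
    Nat.cast_choose ℚ (show m+r ≤ m+2*r by omega),
    Nat.cast_choose ℚ (show m+s ≤ m+2*s by omega),
    show m+2*r-(k+r) = m-k+r by omega, show m+2*s-(k+s) = m-k+s by omega,
    show m+2*r-(m+r) = r by omega, show m+2*s-(m+s) = s by omega]
  unfold Uq
  field_simp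

lemma F0 (m r s : ℕ) :
    Uq m r s 0 = ((m+s).choose s : ℚ) * ((m+r+s).choose (m+s) : ℚ) := by
  rw [Nat.cast_choose ℚ (show s ≤ m+s by omega), Nat.cast_choose ℚ (show m+s ≤ m+r+s by omega),
    show m+s-s = m by omega, show m+r+s-(m+s) = r by omega]
  unfold Uq
  simp only [Nat.sub_zero, Nat.zero_add, Nat.factorial_zero]
  field_simp
  ring

lemma F1 (n a r s : ℕ) :
    ((n+1+a+s).choose (n+1+s) : ℚ) * ((n+1+a+r).choose (n+1) : ℚ) *
      ((n+1+a+r+s).choose (a+s) : ℚ) = Uq (n+1+a) r s (n+1) := by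
  rw [Nat.cast_choose ℚ (show n+1+s ≤ n+1+a+s by omega),
    Nat.cast_choose ℚ (show n+1 ≤ n+1+a+r by omega),
    Nat.cast_choose ℚ (show a+s ≤ n+1+a+r+s by omega),
    show n+1+a+s-(n+1+s) = a by omega, show n+1+a+r-(n+1) = a+r by omega,
    show n+1+a+r+s-(a+s) = n+1+r by omega]
  unfold Uq
  rw [show n+1+a-(n+1) = a by omega, show n+1+a+r+s = n+1+a+(r+s) by omega]
  field_simp

lemma F2' (a b s : ℕ) :
    ((b:ℚ)+1) * ((2*a+b+1+s).choose (a+b+1+s) : ℚ) * ((a+b+1+s).choose (a+s) : ℚ)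
    = ((a:ℚ)+1) * ((2*a+b+1+s).choose (a+b+s) : ℚ) * ((a+b+s).choose (a+s) : ℚ) := by
  rw [Nat.cast_choose ℚ (show a+b+1+s ≤ 2*a+b+1+s by omega),
    Nat.cast_choose ℚ (show a+s ≤ a+b+1+s by omega),
    Nat.cast_choose ℚ (show a+b+s ≤ 2*a+b+1+s by omega),
    Nat.cast_choose ℚ (show a+s ≤ a+b+s by omega),
    show 2*a+b+1+s-(a+b+1+s) = a by omega, show a+b+1+s-(a+s) = b+1 by omega,
    show 2*a+b+1+s-(a+b+s) = a+1 by omega, show a+b+s-(a+s) = b by omega,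
    Nat.factorial_succ b, Nat.factorial_succ a]
  have hx : ((b : ℕ) : ℚ) + 1 ≠ 0 := by positivity
  have hy : ((a : ℕ) : ℚ) + 1 ≠ 0 := by positivity
  push_cast
  field_simp

lemma F4 (n j : ℕ) :
    ((n:ℚ)+2+j) * ((n+1+j).choose (n+1) : ℚ) = ((j:ℚ)+1) * ((n+2+j).choose (n+1) : ℚ) := by
  rw [Nat.cast_choose ℚ (show n+1 ≤ n+1+j by omega),
    Nat.cast_choose ℚ (show n+1 ≤ n+2+j by omega),
    show n+1+j-(n+1) = j by omega, show n+2+j-(n+1) = j+1 by omega,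
    show (n+2+j).factorial = (n+2+j) * (n+1+j).factorial by
      rw [show n+2+j = (n+1+j)+1 by omega, Nat.factorial_succ],
    Nat.factorial_succ j]
  push_cast
  field_simp

lemma F3 (n j a s d e : ℕ) (h1 : n+1+j = a+d) (h2 : a+s = e+1) :
    (a:ℚ) * ((n+1+a+s).choose (n+1+s) : ℚ) * ((n+1+j).choose (n+1) : ℚ) *
        ((n+1+j+s).choose e : ℚ)
      - ((a:ℚ)+1) * ((n+1+a+s).choose (n+s) : ℚ) * ((n+1+j).choose n : ℚ) *
        ((n+1+j+s).choose (e+1) : ℚ)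
    = ((a:ℚ) - ((n:ℚ)+1)) * ((n+1+a+s).choose (n+1+s) : ℚ) *
        ( ((n+2+j).choose (n+1) : ℚ) * ((n+2+j+s).choose (e+1) : ℚ)
          - ((n+1+j).choose (n+1) : ℚ) * ((n+1+j+s).choose (e+1) : ℚ) ) := by
  have hd : (d:ℚ) = (n:ℚ)+1+j-a := by
    have : (n:ℚ)+1+(j:ℚ) = (a:ℚ)+(d:ℚ) := by exact_mod_cast congrArg (Nat.cast (R := ℚ)) h1
    linarith
  have he : (e:ℚ) = (a:ℚ)+s-1 := by
    have : (a:ℚ)+(s:ℚ) = (e:ℚ)+1 := by exact_mod_cast congrArg (Nat.cast (R := ℚ)) h2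
    linarith
  rw [Nat.cast_choose ℚ (show n+1+s ≤ n+1+a+s by omega),
    Nat.cast_choose ℚ (show n+1 ≤ n+1+j by omega),
    Nat.cast_choose ℚ (show e ≤ n+1+j+s by omega),
    Nat.cast_choose ℚ (show n+s ≤ n+1+a+s by omega),
    Nat.cast_choose ℚ (show n ≤ n+1+j by omega),
    Nat.cast_choose ℚ (show e+1 ≤ n+1+j+s by omega),
    Nat.cast_choose ℚ (show n+1 ≤ n+2+j by omega),
    Nat.cast_choose ℚ (show e+1 ≤ n+2+j+s by omega),
    show n+1+a+s-(n+1+s) = a by omega, show n+1+j-(n+1) = j by omega,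
    show n+1+j+s-e = d+1 by omega, show n+1+a+s-(n+s) = a+1 by omega,
    show n+1+j-n = j+1 by omega, show n+1+j+s-(e+1) = d by omega,
    show n+2+j-(n+1) = j+1 by omega, show n+2+j+s-(e+1) = d+1 by omega,
    show (n+2+j).factorial = (n+2+j) * (n+1+j).factorial by
      rw [show n+2+j = (n+1+j)+1 by omega, Nat.factorial_succ],
    show (n+2+j+s).factorial = (n+2+j+s) * (n+1+j+s).factorial by
      rw [show n+2+j+s = (n+1+j+s)+1 by omega, Nat.factorial_succ],
    show (n+1+s).factorial = (n+1+s) * (n+s).factorial by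
      rw [show n+1+s = (n+s)+1 by omega, Nat.factorial_succ]]
  simp only [Nat.factorial_succ]
  have c1 : ((d : ℕ) : ℚ) + 1 ≠ 0 := by positivity
  have c2 : ((e : ℕ) : ℚ) + 1 ≠ 0 := by positivity
  have c3 : ((j : ℕ) : ℚ) + 1 ≠ 0 := by positivity
  have c4 : ((n : ℕ) : ℚ) + 1 ≠ 0 := by positivity
  have c5 : ((a : ℕ) : ℚ) + 1 ≠ 0 := by positivity
  push_cast
  field_simp
  rw [hd, he]
  ring

lemma hockey (μ s : ℕ) : ∀ r : ℕ,
    ∑ j ∈ range (μ+1+r), (j+s).choose (μ+s) = (μ+1+r+s).choose (μ+1+s) := by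
  intro r
  induction r with
  | zero =>
    rw [Finset.sum_range_succ]
    have h0 : ∑ j ∈ range μ, (j+s).choose (μ+s) = 0 := by
      apply Finset.sum_eq_zero
      intro j hj
      exact Nat.choose_eq_zero_of_lt (by have := Finset.mem_range.mp hj; omega)
    rw [h0]
    simp [Nat.choose_self]
  | succ r ih =>
    rw [show μ+1+(r+1) = (μ+1+r)+1 by omega, Finset.sum_range_succ, ih,
      show μ+1+r+1+s = (μ+1+r+s)+1 by omega,
      show μ+1+s = (μ+s)+1 by omega, Nat.choose_succ_succ]
    simp only [Nat.succ_eq_add_one]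
    omega

lemma star (n a s j : ℕ) :
    (a:ℚ) * ((n+1+a+s).choose (n+1+s) : ℚ) * ((n+1+j).choose (n+1) : ℚ) *
        (C ((n:ℤ)+1+j+s) ((a:ℤ)+s-1) : ℚ)
      - ((a:ℚ)+1) * ((n+1+a+s).choose (n+s) : ℚ) * ((n+1+j).choose n : ℚ) *
        ((n+1+j+s).choose (a+s) : ℚ)
    = ((a:ℚ) - ((n:ℚ)+1)) * ((n+1+a+s).choose (n+1+s) : ℚ) *
        ( ((n+2+j).choose (n+1) : ℚ) * ((n+2+j+s).choose (a+s) : ℚ)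
          - ((n+1+j).choose (n+1) : ℚ) * ((n+1+j+s).choose (a+s) : ℚ) ) := by
  rcases le_or_gt a (n+1+j) with hle | hgt
  · -- main case: a ≤ n+1+j
    obtain ⟨d, hd⟩ : ∃ d, n+1+j = a+d := ⟨n+1+j-a, by omega⟩
    rcases Nat.eq_zero_or_pos (a+s) with h0 | hpos
    · -- a = 0, s = 0
      obtain ⟨rfl, rfl⟩ : a = 0 ∧ s = 0 := by omega
      have hC : (C ((n:ℤ)+1+↑j+↑(0:ℕ)) (↑(0:ℕ)+↑(0:ℕ)-1) : ℚ) = 0 := by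
        rw [C_neg _ _ (by norm_num)]
        norm_num
      rw [hC]
      have hp : (n+2+j).choose (n+1) = (n+1+j).choose n + (n+1+j).choose (n+1) := by
        rw [show n+2+j = (n+1+j)+1 by omega]
        simpa [Nat.succ_eq_add_one] using Nat.choose_succ_succ (n+1+j) n
      rw [hp]
      simp only [Nat.add_zero, Nat.choose_self, Nat.choose_zero_right,
        Nat.choose_succ_self_right]
      push_cast
      ring
    · obtain ⟨e, he⟩ : ∃ e, a+s = e+1 := ⟨a+s-1, by omega⟩
      have hC : (C ((n:ℤ)+1+j+s) ((a:ℤ)+s-1) : ℚ) = ((n+1+j+s).choose e : ℚ) := by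
        rw [show ((n:ℤ)+1+j+s) = ((n+1+j+s : ℕ) : ℤ) by push_cast; ring,
          show ((a:ℤ)+s-1) = ((e : ℕ) : ℤ) by omega, C_natCast]
        norm_cast
      rw [hC, he]
      exact F3 n j a s d e hd he
  · rcases eq_or_lt_of_le (Nat.succ_le_of_lt hgt) with hB | hC2
    · -- a = n+2+j
      have ha : a = n+2+j := by omega
      subst ha
      have hC : (C ((n:ℤ)+1+j+s) (((n+2+j : ℕ):ℤ)+s-1) : ℚ) = 1 := by
        rw [show ((n:ℤ)+1+j+s) = ((n+1+j+s : ℕ) : ℤ) by push_cast; ring,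
          show (((n+2+j : ℕ):ℤ)+s-1) = ((n+1+j+s : ℕ) : ℤ) by push_cast; ring, C_natCast]
        simp
      rw [hC]
      rw [Nat.choose_eq_zero_of_lt (show n+1+j+s < (n+2+j)+s by omega),
        show (n+2+j)+s = n+2+j+s from rfl,
        Nat.choose_self (n+2+j+s)]
      push_cast
      linear_combination (((n+1+(n+2+j)+s).choose (n+1+s) : ℚ)) * F4 n j
    · -- a ≥ n+3+j : everything vanishes
      obtain ⟨a', rfl⟩ : ∃ a', a = a'+1 := ⟨a-1, by omega⟩
      have hC : (C ((n:ℤ)+1+j+s) (((a'+1 : ℕ):ℤ)+s-1) : ℚ) = 0 := by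
        rw [show ((n:ℤ)+1+j+s) = ((n+1+j+s : ℕ) : ℤ) by push_cast; ring,
          show (((a'+1 : ℕ):ℤ)+s-1) = ((a'+s : ℕ) : ℤ) by push_cast; ring, C_natCast]
        rw [Nat.choose_eq_zero_of_lt (by omega)]
        norm_num
      rw [hC, Nat.choose_eq_zero_of_lt (show n+1+j+s < (a'+1)+s by omega),
        Nat.choose_eq_zero_of_lt (show n+2+j+s < (a'+1)+s by omega)]
      push_cast
      ring

lemma bound (n a r s : ℕ) :
    ((a:ℚ) - ((n:ℚ)+1)) * ((n+1+a+s).choose (n+1+s) : ℚ) *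
      ( ((n+1+a+r).choose (n+1) : ℚ) * ((n+1+a+r+s).choose (a+s) : ℚ)
        - ((n+1+s).choose (a+s) : ℚ) )
    = ((a:ℚ)+1) * ((n+1+a+s).choose (n+s) : ℚ) * ((n+s).choose (a+s) : ℚ)
      + ((a:ℚ) - ((n:ℚ)+1)) * Uq (n+1+a) r s (n+1) := by
  rcases lt_trichotomy a (n+1) with h | h | h
  · obtain ⟨b, hb⟩ : ∃ b, n = a + b := ⟨n-a, by omega⟩
    subst hb
    have h1 := F1 (a+b) a r s
    have h2 := F2' a b s
    rw [show a+b+1+a+s = 2*a+b+1+s by omega] at h1 ⊢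
    rw [show a+b+1+s = a+b+1+s from rfl] at h2
    push_cast at h1 h2 ⊢
    linear_combination (-((b:ℚ)+1)) * h1 + h2
  · subst h
    rw [Nat.choose_eq_zero_of_lt (show n+s < n+1+s by omega)]
    push_cast
    ring
  · rw [Nat.choose_eq_zero_of_lt (show n+1+s < a+s by omega),
      Nat.choose_eq_zero_of_lt (show n+s < a+s by omega)]
    have h1 := F1 n a r s
    linear_combination ((a:ℚ) - ((n:ℚ)+1)) * h1

lemma step_s1 (n a r s : ℕ) :
    ((a:ℚ)+1) * ((n+1+a+s).choose (n+s) : ℚ) *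
        ∑ j ∈ range (a+1+r), ((n+j).choose n : ℚ) * ((n+j+s).choose (a+s) : ℚ)
      + ((a:ℚ) - ((n:ℚ)+1)) * Uq (n+1+a) r s (n+1)
    = (a:ℚ) * ((n+1+a+s).choose (n+1+s) : ℚ) *
        ∑ j ∈ range (a+r), ((n+1+j).choose (n+1) : ℚ) *
          (C ((n:ℤ)+1+j+s) ((a:ℤ)+s-1) : ℚ) := by
  set CA : ℚ := ((n+1+a+s).choose (n+1+s) : ℚ) with hCA
  set CB : ℚ := ((n+1+a+s).choose (n+s) : ℚ) with hCB
  set V : ℕ → ℚ := fun j => ((n+1+j).choose (n+1) : ℚ) * ((n+1+j+s).choose (a+s) : ℚ)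
    with hV
  -- split the long sum
  have hsplit : ∑ j ∈ range (a+1+r), ((n+j).choose n : ℚ) * ((n+j+s).choose (a+s) : ℚ)
      = (∑ j ∈ range (a+r), ((n+1+j).choose n : ℚ) * ((n+1+j+s).choose (a+s) : ℚ))
        + ((n+s).choose (a+s) : ℚ) := by
    rw [show a+1+r = (a+r)+1 by omega,
      Finset.sum_range_succ' (fun j => ((n+j).choose n : ℚ) * ((n+j+s).choose (a+s) : ℚ))]
    simp only [Nat.add_zero, Nat.choose_self, Nat.cast_one, one_mul]
    congr 1
    · exact Finset.sum_congr rfl fun j _ => by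
        rw [show n+(j+1) = n+1+j by omega]
  have tele : ∀ j ∈ range (a+r),
      (a:ℚ) * CA * (((n+1+j).choose (n+1) : ℚ) * (C ((n:ℤ)+1+j+s) ((a:ℤ)+s-1) : ℚ))
        - ((a:ℚ)+1) * CB * (((n+1+j).choose n : ℚ) * ((n+1+j+s).choose (a+s) : ℚ))
      = ((a:ℚ) - ((n:ℚ)+1)) * CA * (V (j+1) - V j) := by
    intro j _
    have hs := star n a s j
    simp only [hV, hCA, hCB]
    rw [show n+1+(j+1) = n+2+j by omega]
    linear_combination hs
  have E1 : (a:ℚ) * CA * (∑ j ∈ range (a+r), ((n+1+j).choose (n+1) : ℚ) *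
          (C ((n:ℤ)+1+j+s) ((a:ℤ)+s-1) : ℚ))
      - ((a:ℚ)+1) * CB * (∑ j ∈ range (a+r),
          ((n+1+j).choose n : ℚ) * ((n+1+j+s).choose (a+s) : ℚ))
      = ((a:ℚ) - ((n:ℚ)+1)) * CA * (V (a+r) - V 0) := by
    rw [Finset.mul_sum, Finset.mul_sum, ← Finset.sum_sub_distrib,
      Finset.sum_congr rfl tele, ← Finset.mul_sum, Finset.sum_range_sub V]
  have hVar : V (a+r) = ((n+1+a+r).choose (n+1) : ℚ) * ((n+1+a+r+s).choose (a+s) : ℚ) := by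
    simp only [hV]
    rw [show n+1+(a+r) = n+1+a+r by omega]
  have hV0 : V 0 = ((n+1+s).choose (a+s) : ℚ) := by
    simp only [hV]
    rw [show n+1+0 = n+1 by omega, show n+1+0+s = n+1+s by omega, Nat.choose_self]
    norm_num
  have E2 := bound n a r s
  rw [hVar, hV0] at E1
  rw [hsplit]
  linear_combination (-1 : ℚ) * E1 - E2

lemma key (m r s : ℕ) : ∀ n : ℕ, n ≤ m →
    ∑ k ∈ range (n+1), ((m:ℚ) - 2*k) * Uq m r s k
    = ((m:ℚ) - n) * ((m+s).choose (n+s) : ℚ) *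
      ∑ j ∈ range (m-n+r), (C ((n:ℤ)+j) n : ℚ) * (C ((n:ℤ)+j+s) ((m:ℤ)-n+s-1) : ℚ) := by
  intro n
  induction n with
  | zero =>
    intro _
    rcases Nat.eq_zero_or_pos m with rfl | hm
    · norm_num
    · obtain ⟨μ, rfl⟩ : ∃ μ, m = μ+1 := ⟨m-1, by omega⟩
      rw [Finset.sum_range_one]
      have hconv : ∑ j ∈ range (μ+1-0+r),
            (C (((0:ℕ):ℤ)+(j:ℤ)) ((0:ℕ):ℤ) : ℚ) *
              (C (((0:ℕ):ℤ)+(j:ℤ)+(s:ℤ)) (((μ+1:ℕ):ℤ)-((0:ℕ):ℤ)+(s:ℤ)-1) : ℚ)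
          = ((μ+1+r+s).choose (μ+1+s) : ℚ) := by
        have hterm : ∀ j : ℕ,
            (C (((0:ℕ):ℤ)+(j:ℤ)) ((0:ℕ):ℤ) : ℚ) *
              (C (((0:ℕ):ℤ)+(j:ℤ)+(s:ℤ)) (((μ+1:ℕ):ℤ)-((0:ℕ):ℤ)+(s:ℤ)-1) : ℚ)
            = ((j+s).choose (μ+s) : ℚ) := by
          intro j
          rw [show (((0:ℕ):ℤ)+(j:ℤ)+(s:ℤ)) = ((j+s:ℕ):ℤ) by push_cast; ring,
            show (((0:ℕ):ℤ)+(j:ℤ)) = ((j:ℕ):ℤ) by push_cast; ring,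
            show ((((μ+1:ℕ)):ℤ)-((0:ℕ):ℤ)+(s:ℤ)-1) = ((μ+s:ℕ):ℤ) by push_cast; ring,
            C_natCast, C_natCast]
          push_cast
          simp [Nat.choose_zero_right]
        rw [Finset.sum_congr rfl (fun j _ => hterm j), show μ+1-0+r = μ+1+r by omega]
        rw [← Nat.cast_sum]
        rw [hockey μ s r]
      rw [hconv]
      have h0 := F0 (μ+1) r s
      push_cast
      push_cast at h0
      rw [show 0+s = s from Nat.zero_add s]
      linear_combination ((μ:ℚ)+1) * h0
  | succ n ih =>
    intro h
    obtain ⟨a, rfl⟩ : ∃ a, m = n+1+a := ⟨m-(n+1), by omega⟩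
    rw [Finset.sum_range_succ, ih (by omega)]
    have e1 : n+1+a-n+r = a+1+r := by omega
    have e2 : n+1+a-(n+1)+r = a+r := by omega
    rw [e1, e2]
    have conv1 : ∑ j ∈ range (a+1+r),
          (C ((n:ℤ)+j) n : ℚ) * (C ((n:ℤ)+j+s) (((n+1+a:ℕ):ℤ)-(n:ℤ)+s-1) : ℚ)
        = ∑ j ∈ range (a+1+r), ((n+j).choose n : ℚ) * ((n+j+s).choose (a+s) : ℚ) := by
      refine Finset.sum_congr rfl fun j _ => ?_
      rw [show ((n:ℤ)+j+s) = ((n+j+s:ℕ):ℤ) by push_cast; ring,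
        show ((n:ℤ)+j) = ((n+j:ℕ):ℤ) by push_cast; ring,
        show (((n+1+a:ℕ):ℤ)-(n:ℤ)+s-1) = ((a+s:ℕ):ℤ) by push_cast; ring,
        C_natCast, C_natCast]
      push_cast
      ring
    have conv2 : ∑ j ∈ range (a+r),
          (C (((n+1:ℕ):ℤ)+j) ((n+1:ℕ):ℤ) : ℚ) *
            (C (((n+1:ℕ):ℤ)+j+s) (((n+1+a:ℕ):ℤ)-((n+1:ℕ):ℤ)+s-1) : ℚ)
        = ∑ j ∈ range (a+r), ((n+1+j).choose (n+1) : ℚ) *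
            (C ((n:ℤ)+1+j+s) ((a:ℤ)+s-1) : ℚ) := by
      refine Finset.sum_congr rfl fun j _ => ?_
      rw [show (((n+1:ℕ):ℤ)+j+s) = ((n:ℤ)+1+j+s) by push_cast; ring,
        show (((n+1:ℕ):ℤ)+j) = ((n+1+j:ℕ):ℤ) by push_cast; ring,
        show (((n+1+a:ℕ):ℤ)-((n+1:ℕ):ℤ)+s-1) = ((a:ℤ)+s-1) by push_cast; ring,
        C_natCast]
      push_cast
      ring
    rw [conv1, conv2]
    have hstep := step_s1 n a r s
    push_cast
    linear_combination hstep

theorem stmt_1 (m n r s : ℕ) (h : n ≤ m) :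
    ∑ k ∈ range (n + 1),
        ((m : ℚ) - 2 * k) * ((m + r + s).factorial : ℚ) /
            ((m.factorial : ℚ) * (r.factorial : ℚ) * (s.factorial : ℚ)) *
          (C (m) k : ℚ) * (C (m + 2 * r) (k + r) : ℚ) * (C (m + 2 * s) (k + s) : ℚ) /
          ((C (m + 2 * r) (m + r) : ℚ) * (C (m + 2 * s) (m + s) : ℚ) * (C (m + s) (n + s) : ℚ)) =
      ((m : ℚ) - n) *
        ∑ j ∈ range (m - n + r),
          (C ((n : ℤ) + j) n : ℚ) * (C ((n : ℤ) + j + s) ((m : ℤ) - n + s - 1) : ℚ) := by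
  have hA : ((m+2*r).choose (m+r) : ℚ) ≠ 0 := by
    exact_mod_cast (Nat.choose_pos (show m+r ≤ m+2*r by omega)).ne'
  have hB : ((m+2*s).choose (m+s) : ℚ) ≠ 0 := by
    exact_mod_cast (Nat.choose_pos (show m+s ≤ m+2*s by omega)).ne'
  have hC : ((m+s).choose (n+s) : ℚ) ≠ 0 := by
    exact_mod_cast (Nat.choose_pos (show n+s ≤ m+s by omega)).ne'
  have hterm : ∀ k ∈ range (n+1),
      ((m : ℚ) - 2 * k) * ((m + r + s).factorial : ℚ) /
            ((m.factorial : ℚ) * (r.factorial : ℚ) * (s.factorial : ℚ)) *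
          (C (m) k : ℚ) * (C (m + 2 * r) (k + r) : ℚ) * (C (m + 2 * s) (k + s) : ℚ) /
          ((C (m + 2 * r) (m + r) : ℚ) * (C (m + 2 * s) (m + s) : ℚ) * (C (m + s) (n + s) : ℚ))
      = ((m : ℚ) - 2 * k) * Uq m r s k * (((m+s).choose (n+s) : ℚ))⁻¹ := by
    intro k hk
    have hk' : k ≤ m := by have := Finset.mem_range.mp hk; omega
    rw [show ((m:ℤ) + 2*r) = ((m+2*r : ℕ) : ℤ) by push_cast; ring,
      show ((k:ℤ) + r) = ((k+r : ℕ) : ℤ) by push_cast; ring,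
      show ((m:ℤ) + 2*s) = ((m+2*s : ℕ) : ℤ) by push_cast; ring,
      show ((k:ℤ) + s) = ((k+s : ℕ) : ℤ) by push_cast; ring,
      show ((m:ℤ) + r) = ((m+r : ℕ) : ℤ) by push_cast; ring,
      show ((m:ℤ) + s) = ((m+s : ℕ) : ℤ) by push_cast; ring,
      show ((n:ℤ) + s) = ((n+s : ℕ) : ℤ) by push_cast; ring,
      C_natCast, C_natCast, C_natCast, C_natCast, C_natCast, C_natCast]
    push_cast
    have e := claimA m r s k hk'
    calc ((m : ℚ) - 2 * k) * ((m + r + s).factorial : ℚ) /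
            ((m.factorial : ℚ) * (r.factorial : ℚ) * (s.factorial : ℚ)) *
          (m.choose k : ℚ) * ((m+2*r).choose (k+r) : ℚ) * ((m+2*s).choose (k+s) : ℚ) /
          (((m+2*r).choose (m+r) : ℚ) * ((m+2*s).choose (m+s) : ℚ) * ((m+s).choose (n+s) : ℚ))
        = ((m : ℚ) - 2 * k) * (((m + r + s).factorial : ℚ) /
            ((m.factorial : ℚ) * (r.factorial : ℚ) * (s.factorial : ℚ)) *
          (m.choose k : ℚ) * ((m+2*r).choose (k+r) : ℚ) * ((m+2*s).choose (k+s) : ℚ)) /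
          (((m+2*r).choose (m+r) : ℚ) * ((m+2*s).choose (m+s) : ℚ) * ((m+s).choose (n+s) : ℚ)) := by
          ring
      _ = ((m : ℚ) - 2 * k) * (Uq m r s k * ((m+2*r).choose (m+r) : ℚ) *
            ((m+2*s).choose (m+s) : ℚ)) /
          (((m+2*r).choose (m+r) : ℚ) * ((m+2*s).choose (m+s) : ℚ) * ((m+s).choose (n+s) : ℚ)) := by
          rw [e]
      _ = ((m : ℚ) - 2 * k) * Uq m r s k * (((m+s).choose (n+s) : ℚ))⁻¹ := by
          field_simp
  rw [Finset.sum_congr rfl hterm, ← Finset.sum_mul, key m r s n h]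
  field_simp
end

section
/- For non-negative integers a, b, c, the function U(a,b,c) := a·C(a+b,a)·∑_{j=0}^{c-1} C(a+j,a)·C(b+j,b-1) is symmetric in a, b, c; that is, U(a,b,c) = U(σ(a),σ(b),σ(c)) for every permutation σ of {a,b,c}. -/
open Finset

/-- `U a b c = a·C(a+b,a)·∑_{j=0}^{c-1} C(a+j,a)·C(b+j,b-1)`. -/
def U (a b c : ℕ) : ℤ :=
  (a : ℤ) * C ((a : ℤ) + b) a *
    ∑ j ∈ range c, C ((a : ℤ) + j) a * C ((b : ℤ) + j) ((b : ℤ) - 1)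

namespace StmtAux

lemma Cnat (m k : ℕ) : C (m : ℤ) (k : ℤ) = (m.choose k : ℤ) := by
  unfold C
  split_ifs with h
  · simp
  · have hk : m < k := by omega
    rw [Nat.choose_eq_zero_of_lt hk]
    simp

lemma Cbm (b j : ℕ) : C ((b : ℤ) + j) ((b : ℤ) - 1) = ((b + j).choose (j + 1) : ℤ) := by
  cases b with
  | zero =>
      unfold C
      rw [if_neg (by omega)]
      rw [Nat.choose_eq_zero_of_lt (by omega)]
      simp
  | succ b' =>
      have h1 : ((b' + 1 : ℕ) : ℤ) + j = ((b' + 1 + j : ℕ) : ℤ) := by push_cast; ring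
      have h2 : ((b' + 1 : ℕ) : ℤ) - 1 = ((b' : ℕ) : ℤ) := by push_cast; ring
      rw [h1, h2, Cnat]
      congr 1
      rw [← Nat.choose_symm (show j + 1 ≤ b' + 1 + j by omega)]
      congr 1
      omega

/-- Nat-level version of `U`, valued in `ℤ`. -/
def Un (a b c : ℕ) : ℤ :=
  (a : ℤ) * ((a + b).choose a : ℤ) *
    ∑ j ∈ range c, ((a + j).choose a : ℤ) * ((b + j).choose (j + 1) : ℤ)

lemma UeqUn (a b c : ℕ) : U a b c = Un a b c := by
  unfold U Un
  congr 1
  · congr 1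
    rw [show ((a : ℤ) + b) = ((a + b : ℕ) : ℤ) by push_cast; ring]
    exact Cnat _ _
  · refine Finset.sum_congr rfl fun j _ => ?_
    rw [show ((a : ℤ) + j) = ((a + j : ℕ) : ℤ) by push_cast; ring, Cnat, Cbm]

lemma chs (x y : ℕ) : ((x + y).choose x : ℤ) = ((x + y).choose y : ℤ) := by
  norm_cast
  rw [← Nat.choose_symm (show x ≤ x + y by omega)]
  congr 1
  omega

lemma csrA (x y : ℕ) :
    (((x + y).choose (y + 1) : ℤ)) * (y + 1) = ((x + y).choose y : ℤ) * x := by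
  have h := Nat.choose_succ_right_eq (x + y) y
  have h2 : x + y - y = x := by omega
  rw [h2] at h
  exact_mod_cast h

lemma pas (n k : ℕ) : (((n + 1).choose (k + 1) : ℤ)) = (n.choose k : ℤ) + (n.choose (k + 1) : ℤ) := by
  exact_mod_cast Nat.choose_succ_succ n k

/-- The key three-binomial identity. -/
lemma star (a b c : ℕ) :
    ((a + b).choose (b + 1) : ℤ) * (((a + c).choose a : ℤ) * ((b + c + 1).choose (c + 1) : ℤ)) =
    ((a + b).choose a : ℤ) * (((a + c).choose (c + 1) : ℤ) * ((b + c + 1).choose (b + 1) : ℤ)) := by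
  have hbc : ((b : ℤ) + 1) * ((c : ℤ) + 1) ≠ 0 := by positivity
  apply mul_right_cancel₀ hbc
  have e1 : ((a + b).choose (b + 1) : ℤ) * (b + 1) = ((a + b).choose b : ℤ) * a := csrA a b
  have e2 : ((a + c).choose (c + 1) : ℤ) * (c + 1) = ((a + c).choose c : ℤ) * a := csrA a c
  have e3 : ((b + c + 1).choose (c + 1) : ℤ) * (c + 1) = ((b + c + 1).choose c : ℤ) * (b + 1) := by
    have := csrA (b + 1) c
    rw [show b + 1 + c = b + c + 1 by omega] at this
    exact_mod_cast this
  have e4 : ((b + c + 1).choose (b + 1) : ℤ) * (b + 1) = ((b + c + 1).choose b : ℤ) * (c + 1) := by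
    have := csrA (c + 1) b
    rw [show c + 1 + b = b + c + 1 by omega] at this
    push_cast at this ⊢
    linarith
  have h1 : ((a + b).choose b : ℤ) = ((a + b).choose a : ℤ) := by
    have := chs a b; linarith
  have h2 : ((a + c).choose c : ℤ) = ((a + c).choose a : ℤ) := by
    have := chs a c; linarith
  have e5 : ((b + c + 1).choose c : ℤ) = ((b + c + 1).choose (b + 1) : ℤ) := by
    have := chs c (b + 1)
    rw [show c + (b + 1) = b + c + 1 by omega] at this
    exact this
  calc ((a + b).choose (b + 1) : ℤ) * (((a + c).choose a : ℤ) * ((b + c + 1).choose (c + 1) : ℤ)) * (((b : ℤ) + 1) * ((c : ℤ) + 1))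
      = (((a + b).choose (b + 1) : ℤ) * (b + 1)) * (((b + c + 1).choose (c + 1) : ℤ) * (c + 1)) * ((a + c).choose a : ℤ) := by ring
    _ = (((a + b).choose b : ℤ) * a) * (((b + c + 1).choose c : ℤ) * (b + 1)) * ((a + c).choose a : ℤ) := by rw [e1, e3]
    _ = (((a + b).choose a : ℤ) * a) * (((b + c + 1).choose (b + 1) : ℤ) * (b + 1)) * ((a + c).choose a : ℤ) := by rw [h1, e5]
    _ = (((a + b).choose a : ℤ) * a) * (((b + c + 1).choose b : ℤ) * (c + 1)) * ((a + c).choose a : ℤ) := by rw [e4]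
    _ = ((a + b).choose a : ℤ) * (((a + c).choose a : ℤ) * a) * (((b + c + 1).choose b : ℤ) * (c + 1)) := by ring
    _ = ((a + b).choose a : ℤ) * (((a + c).choose c : ℤ) * a) * (((b + c + 1).choose b : ℤ) * (c + 1)) := by rw [h2]
    _ = ((a + b).choose a : ℤ) * (((a + c).choose (c + 1) : ℤ) * (c + 1)) * (((b + c + 1).choose (b + 1) : ℤ) * (b + 1)) := by rw [e2, e4]
    _ = ((a + b).choose a : ℤ) * (((a + c).choose (c + 1) : ℤ) * ((b + c + 1).choose (b + 1) : ℤ)) * (((b : ℤ) + 1) * ((c : ℤ) + 1)) := by ring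

lemma Un_succ (a b c : ℕ) :
    Un a b (c + 1) = Un a b c +
      (a : ℤ) * ((a + b).choose a : ℤ) * (((a + c).choose a : ℤ) * ((b + c).choose (c + 1) : ℤ)) := by
  unfold Un
  rw [sum_range_succ]
  ring

lemma dmid (a b : ℕ) : ∀ c, Un a (b + 1) c = Un a b c +
    (a : ℤ) * (((a + c).choose a : ℤ) * (((a + b).choose a : ℤ) * ((b + c).choose (b + 1) : ℤ))) := by
  intro c
  induction c with
  | zero => simp [Un, Nat.choose_succ_self]
  | succ c ih =>
      rw [Un_succ, Un_succ, ih]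
      simp only [show a + (b + 1) = a + b + 1 from by omega,
        show b + 1 + c = b + c + 1 from by omega,
        show b + (c + 1) = b + c + 1 from by omega,
        show a + (c + 1) = a + c + 1 from by omega]
      have hp1 : ((a + b + 1).choose a : ℤ) = ((a + b).choose a : ℤ) + ((a + b).choose (b + 1) : ℤ) := by
        have hs : ((a + b + 1).choose a : ℤ) = ((a + b + 1).choose (b + 1) : ℤ) := by
          have := chs a (b + 1)
          rw [show a + (b + 1) = a + b + 1 by omega] at this
          exact this
        rw [hs, pas (a + b) b, ← chs a b]
      have hp2 : ((a + c + 1).choose a : ℤ) = ((a + c).choose a : ℤ) + ((a + c).choose (c + 1) : ℤ) := by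
        have hs : ((a + c + 1).choose a : ℤ) = ((a + c + 1).choose (c + 1) : ℤ) := by
          have := chs a (c + 1)
          rw [show a + (c + 1) = a + c + 1 by omega] at this
          exact this
        rw [hs, pas (a + c) c, ← chs a c]
      have hp3 : ((b + c + 1).choose (c + 1) : ℤ) = ((b + c).choose c : ℤ) + ((b + c).choose (c + 1) : ℤ) :=
        pas (b + c) c
      have hp4 : ((b + c + 1).choose (b + 1) : ℤ) = ((b + c).choose b : ℤ) + ((b + c).choose (b + 1) : ℤ) :=
        pas (b + c) b
      have hq : ((b + c).choose c : ℤ) = ((b + c).choose b : ℤ) := (chs b c).symm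
      have hstar := star a b c
      linear_combination (a : ℤ) * ((a + c).choose a : ℤ) * ((b + c + 1).choose (c + 1) : ℤ) * hp1
        - (a : ℤ) * ((a + b).choose a : ℤ) * ((b + c + 1).choose (b + 1) : ℤ) * hp2
        + (a : ℤ) * ((a + b).choose a : ℤ) * ((a + c).choose a : ℤ) * hp3
        - (a : ℤ) * ((a + b).choose a : ℤ) * ((a + c).choose a : ℤ) * hp4
        + (a : ℤ) * ((a + b).choose a : ℤ) * ((a + c).choose a : ℤ) * hq
        + (a : ℤ) * hstar

lemma t12 (a b j : ℕ) :
    (a : ℤ) * (((a + j).choose a : ℤ) * ((b + j).choose (j + 1) : ℤ)) =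
    (b : ℤ) * (((b + j).choose b : ℤ) * ((a + j).choose (j + 1) : ℤ)) := by
  have hj : ((j : ℤ) + 1) ≠ 0 := by positivity
  apply mul_right_cancel₀ hj
  have ea : ((a + j).choose (j + 1) : ℤ) * (j + 1) = ((a + j).choose j : ℤ) * a := csrA a j
  have eb : ((b + j).choose (j + 1) : ℤ) * (j + 1) = ((b + j).choose j : ℤ) * b := csrA b j
  have ha : ((a + j).choose j : ℤ) = ((a + j).choose a : ℤ) := (chs a j).symm
  have hb : ((b + j).choose j : ℤ) = ((b + j).choose b : ℤ) := (chs b j).symm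
  linear_combination (a : ℤ) * ((a + j).choose a : ℤ) * eb - (b : ℤ) * ((b + j).choose b : ℤ) * ea
    + (a : ℤ) * (b : ℤ) * ((a + j).choose a : ℤ) * hb - (a : ℤ) * (b : ℤ) * ((b + j).choose b : ℤ) * ha

lemma s12Un (a b c : ℕ) : Un a b c = Un b a c := by
  unfold Un
  rw [Finset.mul_sum, Finset.mul_sum]
  refine Finset.sum_congr rfl fun j _ => ?_
  have hab : ((a + b).choose a : ℤ) = ((b + a).choose b : ℤ) := by
    rw [Nat.add_comm a b]; exact (chs b a).symm
  linear_combination (((b + j).choose (j + 1) : ℤ) * ((a + j).choose a : ℤ) * (a : ℤ)) * hab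
    + ((b + a).choose b : ℤ) * t12 a b j

lemma s23Un (a b c : ℕ) : Un a b c = Un a c b := by
  induction c with
  | zero =>
      unfold Un
      simp [Nat.choose_eq_zero_of_lt]
  | succ c ih =>
      rw [Un_succ, ih, dmid a c b]
      have h1 : ((c + b).choose (c + 1) : ℤ) = ((b + c).choose (c + 1) : ℤ) := by
        rw [Nat.add_comm c b]
      rw [h1]
      ring

lemma s12 (a b c : ℕ) : U a b c = U b a c := by
  rw [UeqUn, UeqUn]; exact s12Un a b c

lemma s23 (a b c : ℕ) : U a b c = U a c b := by
  rw [UeqUn, UeqUn]; exact s23Un a b c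

end StmtAux

theorem stmt_2 (a b c : ℕ) (σ : Equiv.Perm (Fin 3)) :
    U (![a, b, c] (σ 0)) (![a, b, c] (σ 1)) (![a, b, c] (σ 2)) = U a b c := by
  have e : ∀ i : Fin 3, i = 0 ∨ i = 1 ∨ i = 2 := by decide
  have inj := σ.injective
  rcases e (σ 0) with h0 | h0 | h0 <;> rcases e (σ 1) with h1 | h1 | h1 <;>
    rcases e (σ 2) with h2 | h2 | h2 <;>
    first
      | (exact absurd (inj (h0.trans h1.symm)) (by decide))
      | (exact absurd (inj (h0.trans h2.symm)) (by decide))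
      | (exact absurd (inj (h1.trans h2.symm)) (by decide))
      | (rw [h0, h1, h2]
         simp only [Matrix.cons_val_zero, Matrix.cons_val_one, Matrix.head_cons,
           Matrix.cons_val_two, Matrix.tail_cons]
         all_goals first
           | rfl
           | exact StmtAux.s12 b a c
           | exact StmtAux.s23 a c b
           | exact (StmtAux.s23 b c a).trans (StmtAux.s12 b a c)
           | exact (StmtAux.s12 c a b).trans (StmtAux.s23 a c b)
           | exact (StmtAux.s23 c b a).trans ((StmtAux.s12 c a b).trans (StmtAux.s23 a c b)))
end

section
/- For non-negative integers a, b, c with Q_{x,y} := C(x+y,x), we have (Q_{a,b}·Q_{b,c}·Q_{c,a})/(Q_{a,a}·Q_{b,b}·Q_{c,c}) · ∑_{k=0}^{a} k·C(2a,a+k)·C(2b,b+k)·C(2c,c+k) = (a·Q_{c,a}/2)·∑_{j=0}^{b-1} C(a+j,a)·C(c+j,c-1). -/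
open Finset

lemma Cq (m n : ℕ) : ((C (m:ℤ) (n:ℤ) : ℤ) : ℚ) = (m.choose n : ℚ) := by
  unfold C
  by_cases h : (n:ℤ) ≤ (m:ℤ)
  · rw [if_pos ⟨Int.natCast_nonneg n, h⟩]; simp
  · rw [if_neg (by tauto)]
    have : m < n := by exact_mod_cast not_le.mp h
    simp [Nat.choose_eq_zero_of_lt this]

lemma pre (a b c k : ℕ) (hka : k ≤ a) :
    ((a+b).choose a : ℚ) * ((b+c).choose b : ℚ) * ((c+a).choose c : ℚ) *
      (((2*a).choose (a+k) : ℚ) * ((2*b).choose (b+k) : ℚ) * ((2*c).choose (c+k) : ℚ))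
    = ((2*a).choose a : ℚ) * ((2*b).choose b : ℚ) * ((2*c).choose c : ℚ) *
      (((a+b).choose (a+k) : ℚ) * ((b+c).choose (b+k) : ℚ) * ((c+a).choose (c+k) : ℚ)) := by
  by_cases hkb : k ≤ b
  · by_cases hkc : k ≤ c
    · rw [Nat.cast_choose ℚ (show a ≤ a+b by omega),
        Nat.cast_choose ℚ (show b ≤ b+c by omega),
        Nat.cast_choose ℚ (show c ≤ c+a by omega),
        Nat.cast_choose ℚ (show a+k ≤ 2*a by omega),
        Nat.cast_choose ℚ (show b+k ≤ 2*b by omega),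
        Nat.cast_choose ℚ (show c+k ≤ 2*c by omega),
        Nat.cast_choose ℚ (show a ≤ 2*a by omega),
        Nat.cast_choose ℚ (show b ≤ 2*b by omega),
        Nat.cast_choose ℚ (show c ≤ 2*c by omega),
        Nat.cast_choose ℚ (show a+k ≤ a+b by omega),
        Nat.cast_choose ℚ (show b+k ≤ b+c by omega),
        Nat.cast_choose ℚ (show c+k ≤ c+a by omega),
        show a+b-a = b by omega, show b+c-b = c by omega, show c+a-c = a by omega,
        show 2*a-(a+k) = a-k by omega, show 2*b-(b+k) = b-k by omega,
        show 2*c-(c+k) = c-k by omega,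
        show 2*a-a = a by omega, show 2*b-b = b by omega, show 2*c-c = c by omega,
        show a+b-(a+k) = b-k by omega, show b+c-(b+k) = c-k by omega,
        show c+a-(c+k) = a-k by omega]
      have f : ∀ n : ℕ, ((Nat.factorial n : ℕ) : ℚ) ≠ 0 := fun n => by
        exact_mod_cast (Nat.factorial_ne_zero n)
      field_simp
    · have h1 : (2*c).choose (c+k) = 0 := Nat.choose_eq_zero_of_lt (by omega)
      have h2 : (b+c).choose (b+k) = 0 := Nat.choose_eq_zero_of_lt (by omega)
      simp [h1, h2]
  · have h1 : (2*b).choose (b+k) = 0 := Nat.choose_eq_zero_of_lt (by omega)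
    have h2 : (a+b).choose (a+k) = 0 := Nat.choose_eq_zero_of_lt (by omega)
    simp [h1, h2]

lemma key_s3 (a b c k : ℕ) (hk1 : 1 ≤ k) (hka : k ≤ a) :
    ((a:ℚ)+1-k) * ((a+b).choose (a+k-1) : ℚ) * ((b+c).choose (b+k) : ℚ) * ((c+a).choose (c+k-1) : ℚ)
      + 2*k * ((a+b).choose (a+k) : ℚ) * ((b+c).choose (b+k) : ℚ) * ((c+a).choose (c+k) : ℚ)
    = ((a:ℚ)-k) * ((a+b).choose (a+k) : ℚ) * ((b+c).choose (b+k+1) : ℚ) * ((c+a).choose (c+k) : ℚ)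
      + 2*k * ((a+b+1).choose (a+k) : ℚ) * ((b+c+1).choose (b+k+1) : ℚ) * ((c+a).choose (c+k) : ℚ) := by
  by_cases hkb : k ≤ b + 1
  · by_cases hkc : k ≤ c
    · set X : ℚ := ((a+b).choose (a+k-1) : ℚ) with hXd
      set X' : ℚ := ((a+b).choose (a+k) : ℚ) with hX'd
      set Y : ℚ := ((b+c).choose (b+k) : ℚ) with hYd
      set Y' : ℚ := ((b+c).choose (b+k+1) : ℚ) with hY'd
      set Z : ℚ := ((c+a).choose (c+k-1) : ℚ) with hZd
      set Z' : ℚ := ((c+a).choose (c+k) : ℚ) with hZ'd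
      set P : ℚ := ((a+b+1).choose (a+k) : ℚ) with hPd
      set Q : ℚ := ((b+c+1).choose (b+k+1) : ℚ) with hQd
      have hX : ((a:ℚ)+b+1) * X = ((a:ℚ)+k) * P := by
        have h := Nat.add_one_mul_choose_eq (a+b) (a+k-1)
        rw [show a+k-1+1 = a+k by omega] at h
        have h2 := congrArg (fun n : ℕ => (n:ℚ)) h
        push_cast at h2
        rw [hXd, hPd]; push_cast; linear_combination h2
      have hX' : ((a:ℚ)+b+1) * X' = ((b:ℚ)+1-k) * P := by
        have h := Nat.choose_mul_succ_eq (a+b) (a+k)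
        rw [show a+b+1-(a+k) = b+1-k by omega] at h
        have h2 := congrArg (fun n : ℕ => (n:ℚ)) h
        push_cast [Nat.cast_sub (show k ≤ b+1 by omega)] at h2
        rw [hX'd, hPd]; push_cast; linear_combination h2
      have hY : ((b:ℚ)+c+1) * Y = ((b:ℚ)+k+1) * Q := by
        have h := Nat.add_one_mul_choose_eq (b+c) (b+k)
        have h2 := congrArg (fun n : ℕ => (n:ℚ)) h
        push_cast at h2
        rw [hYd, hQd]; push_cast; linear_combination h2
      have hY' : ((b:ℚ)+c+1) * Y' = ((c:ℚ)-k) * Q := by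
        have h := Nat.choose_mul_succ_eq (b+c) (b+k+1)
        rw [show b+c+1-(b+k+1) = c-k by omega] at h
        have h2 := congrArg (fun n : ℕ => (n:ℚ)) h
        push_cast [Nat.cast_sub hkc] at h2
        rw [hY'd, hQd]; push_cast; linear_combination h2
      have hZ' : ((c:ℚ)+k) * Z' = ((a:ℚ)+1-k) * Z := by
        have h := Nat.choose_succ_right_eq (c+a) (c+k-1)
        rw [show c+k-1+1 = c+k by omega, show c+a-(c+k-1) = a+1-k by omega] at h
        have h2 := congrArg (fun n : ℕ => (n:ℚ)) h
        push_cast [Nat.cast_sub (show k ≤ a+1 by omega)] at h2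
        rw [hZd, hZ'd]; push_cast; linear_combination h2
      have hM : ((a:ℚ)+b+1) * (((b:ℚ)+c+1) * ((c:ℚ)+k)) ≠ 0 := by
        have hkq : (0:ℚ) < (k:ℚ) := by exact_mod_cast hk1
        have h1 : (0:ℚ) ≤ (a:ℚ) := Nat.cast_nonneg a
        have h2 : (0:ℚ) ≤ (b:ℚ) := Nat.cast_nonneg b
        have h3 : (0:ℚ) ≤ (c:ℚ) := Nat.cast_nonneg c
        positivity
      apply mul_left_cancel₀ hM
      linear_combination
        (((a:ℚ)+1-k)*((c:ℚ)+k)*Z*(((b:ℚ)+c+1)*Y)) * hX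
        + (((a:ℚ)+1-k)*((c:ℚ)+k)*Z*(((a:ℚ)+k)*P)) * hY
        + (2*(k:ℚ)*(((b:ℚ)+c+1)*Y)*(((c:ℚ)+k)*Z')) * hX'
        + (2*(k:ℚ)*(((b:ℚ)+1-k)*P)*(((c:ℚ)+k)*Z')) * hY
        + (2*(k:ℚ)*(((b:ℚ)+1-k)*P)*(((b:ℚ)+k+1)*Q)) * hZ'
        - (((a:ℚ)-k)*(((b:ℚ)+c+1)*Y')*(((c:ℚ)+k)*Z')) * hX'
        - (((a:ℚ)-k)*(((b:ℚ)+1-k)*P)*(((c:ℚ)+k)*Z')) * hY'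
        - (((a:ℚ)-k)*(((b:ℚ)+1-k)*P)*(((c:ℚ)-k)*Q)) * hZ'
        - (2*(k:ℚ)*(((a:ℚ)+b+1)*(((b:ℚ)+c+1)))*P*Q) * hZ'
    · have h1 : (b+c).choose (b+k) = 0 := Nat.choose_eq_zero_of_lt (by omega)
      have h2 : (b+c).choose (b+k+1) = 0 := Nat.choose_eq_zero_of_lt (by omega)
      have h3 : (b+c+1).choose (b+k+1) = 0 := Nat.choose_eq_zero_of_lt (by omega)
      simp [h1, h2, h3]
  · have h1 : (a+b).choose (a+k-1) = 0 := Nat.choose_eq_zero_of_lt (by omega)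
    have h2 : (a+b).choose (a+k) = 0 := Nat.choose_eq_zero_of_lt (by omega)
    have h3 : (a+b+1).choose (a+k) = 0 := Nat.choose_eq_zero_of_lt (by omega)
    simp [h1, h2, h3]

lemma clean (a c : ℕ) (hc : 1 ≤ c) (b : ℕ) :
    2 * ∑ k ∈ range (a+1),
        (k:ℚ) * ((a+b).choose (a+k) : ℚ) * ((b+c).choose (b+k) : ℚ) * ((c+a).choose (c+k) : ℚ)
    = (a:ℚ) * ((c+a).choose c : ℚ) *
        ∑ j ∈ range b, ((a+j).choose a : ℚ) * ((c+j).choose (c-1) : ℚ) := by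
  induction b with
  | zero =>
    rw [Finset.sum_range_zero, mul_zero]
    rw [Finset.sum_eq_zero, mul_zero]
    intro k hk
    rcases Nat.eq_zero_or_pos k with h | h
    · simp [h]
    · have h0 : (a+0).choose (a+k) = 0 := Nat.choose_eq_zero_of_lt (by omega)
      rw [h0]
      push_cast
      ring
  | succ b ih =>
    -- define the telescoping function
    set f : ℕ → ℚ := fun i => ((a:ℚ)-i) * ((a+b).choose (a+i) : ℚ) * ((b+c).choose (b+i+1) : ℚ)
        * ((c+a).choose (c+i) : ℚ) with hf
    have e1 : ∑ k ∈ range (a+1),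
        (k:ℚ) * ((a+(b+1)).choose (a+k) : ℚ) * (((b+1)+c).choose ((b+1)+k) : ℚ) * ((c+a).choose (c+k) : ℚ)
        = ∑ i ∈ range a,
        ((i:ℚ)+1) * ((a+b+1).choose (a+i+1) : ℚ) * ((b+c+1).choose (b+i+2) : ℚ) * ((c+a).choose (c+i+1) : ℚ) := by
      rw [Finset.sum_range_succ']
      simp only [Nat.cast_zero, zero_mul, mul_zero, zero_mul, add_zero]
      apply Finset.sum_congr rfl
      intro i _
      push_cast
      rw [show a+(b+1) = a+b+1 by omega, show a+(i+1) = a+i+1 by omega,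
        show b+1+c = b+c+1 by omega, show b+1+(i+1) = b+i+2 by omega,
        show c+(i+1) = c+i+1 by omega]
    have e2 : ∑ k ∈ range (a+1),
        (k:ℚ) * ((a+b).choose (a+k) : ℚ) * ((b+c).choose (b+k) : ℚ) * ((c+a).choose (c+k) : ℚ)
        = ∑ i ∈ range a,
        ((i:ℚ)+1) * ((a+b).choose (a+i+1) : ℚ) * ((b+c).choose (b+i+1) : ℚ) * ((c+a).choose (c+i+1) : ℚ) := by
      rw [Finset.sum_range_succ']
      simp only [Nat.cast_zero, zero_mul, mul_zero, zero_mul, add_zero]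
      apply Finset.sum_congr rfl
      intro i _
      push_cast
      rw [show a+(i+1) = a+i+1 by omega, show b+(i+1) = b+i+1 by omega,
        show c+(i+1) = c+i+1 by omega]
    rw [e1]
    -- pointwise: 2*(i+1)*P*Q*Z' = (f i - f (i+1)) + 2*(i+1)*X'*Y*Z'
    have point : ∀ i ∈ range a,
        2 * (((i:ℚ)+1) * ((a+b+1).choose (a+i+1) : ℚ) * ((b+c+1).choose (b+i+2) : ℚ) * ((c+a).choose (c+i+1) : ℚ))
        = (f i - f (i+1))
          + 2 * (((i:ℚ)+1) * ((a+b).choose (a+i+1) : ℚ) * ((b+c).choose (b+i+1) : ℚ) * ((c+a).choose (c+i+1) : ℚ)) := by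
      intro i hi
      have hia : i + 1 ≤ a := by
        have := Finset.mem_range.mp hi; omega
      have hk := key_s3 a b c (i+1) (by omega) hia
      rw [show a+(i+1)-1 = a+i by omega, show c+(i+1)-1 = c+i by omega,
        show a+(i+1) = a+i+1 by omega, show b+(i+1) = b+i+1 by omega,
        show c+(i+1) = c+i+1 by omega, show b+i+1+1 = b+i+2 by omega] at hk
      simp only [hf]
      rw [show b+(i+1)+1 = b+i+2 by omega, show a+(i+1) = a+i+1 by omega,
        show c+(i+1) = c+i+1 by omega]
      push_cast at hk ⊢
      linear_combination -hk
    rw [Finset.mul_sum, Finset.sum_congr rfl point, Finset.sum_add_distrib, ← Finset.mul_sum]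
    rw [Finset.sum_range_sub' f]
    rw [← e2, ih]
    have hf0 : f 0 = (a:ℚ) * ((a+b).choose a : ℚ) * ((b+c).choose (b+1) : ℚ) * ((c+a).choose c : ℚ) := by
      rw [hf]; push_cast; ring_nf
    have hfa : f a = 0 := by
      rw [hf]; simp
    have hsymm : ((b+c).choose (b+1) : ℚ) = ((c+b).choose (c-1) : ℚ) := by
      have h := Nat.choose_symm (show b+1 ≤ b+c by omega)
      rw [show b+c-(b+1) = c-1 by omega] at h
      rw [show c+b = b+c by omega, h]
    rw [Finset.sum_range_succ]
    rw [hf0, hfa, hsymm]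
    push_cast
    rw [show c+b = b+c from by omega, show a+b = b+a from by omega]
    ring

theorem stmt_3 (a b c : ℕ) :
    ((C ((a : ℤ) + b) a : ℚ) * (C ((b : ℤ) + c) b : ℚ) * (C ((c : ℤ) + a) c : ℚ)) /
          ((C (2 * (a : ℤ)) a : ℚ) * (C (2 * (b : ℤ)) b : ℚ) * (C (2 * (c : ℤ)) c : ℚ)) *
        ∑ k ∈ range (a + 1),
          (k : ℚ) * (C (2 * (a : ℤ)) ((a : ℤ) + k) : ℚ) * (C (2 * (b : ℤ)) ((b : ℤ) + k) : ℚ) *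
            (C (2 * (c : ℤ)) ((c : ℤ) + k) : ℚ) =
      (a : ℚ) * (C ((c : ℤ) + a) c : ℚ) / 2 *
        ∑ j ∈ range b, (C ((a : ℤ) + j) a : ℚ) * (C ((c : ℤ) + j) ((c : ℤ) - 1) : ℚ) := by
  rcases Nat.eq_zero_or_pos c with hc | hc
  · subst hc
    have hL : ∑ k ∈ range (a + 1),
        (k : ℚ) * (C (2 * (a : ℤ)) ((a : ℤ) + k) : ℚ) * (C (2 * (b : ℤ)) ((b : ℤ) + k) : ℚ) *
          (C (2 * ((0:ℕ) : ℤ)) (((0:ℕ) : ℤ) + k) : ℚ) = 0 := by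
      apply Finset.sum_eq_zero
      intro k _
      rcases Nat.eq_zero_or_pos k with h | h
      · simp [h]
      · have : C (2 * ((0:ℕ) : ℤ)) (((0:ℕ) : ℤ) + k) = 0 := by
          unfold C
          rw [if_neg]
          push_cast
          intro ⟨h1, h2⟩
          have : (k:ℤ) ≥ 1 := by exact_mod_cast h
          linarith
        rw [this]
        push_cast
        ring
    have hR : ∑ j ∈ range b, (C ((a : ℤ) + j) a : ℚ) * (C (((0:ℕ) : ℤ) + j) (((0:ℕ) : ℤ) - 1) : ℚ) = 0 := by
      apply Finset.sum_eq_zero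
      intro j _
      have : C (((0:ℕ) : ℤ) + j) (((0:ℕ) : ℤ) - 1) = 0 := by
        unfold C
        rw [if_neg]
        norm_num
      rw [this]
      push_cast
      ring
    rw [hL, hR]
    push_cast
    ring
  · -- c ≥ 1
    have eL : ∑ k ∈ range (a + 1),
        (k : ℚ) * (C (2 * (a : ℤ)) ((a : ℤ) + k) : ℚ) * (C (2 * (b : ℤ)) ((b : ℤ) + k) : ℚ) *
          (C (2 * (c : ℤ)) ((c : ℤ) + k) : ℚ)
        = ∑ k ∈ range (a + 1),
        (k : ℚ) * ((2*a).choose (a+k) : ℚ) * ((2*b).choose (b+k) : ℚ) * ((2*c).choose (c+k) : ℚ) := by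
      apply Finset.sum_congr rfl
      intro k _
      rw [show 2 * (a:ℤ) = ((2*a : ℕ) : ℤ) by push_cast; ring,
        show (a:ℤ) + k = ((a+k : ℕ) : ℤ) by push_cast; ring,
        show 2 * (b:ℤ) = ((2*b : ℕ) : ℤ) by push_cast; ring,
        show (b:ℤ) + k = ((b+k : ℕ) : ℤ) by push_cast; ring,
        show 2 * (c:ℤ) = ((2*c : ℕ) : ℤ) by push_cast; ring,
        show (c:ℤ) + k = ((c+k : ℕ) : ℤ) by push_cast; ring,
        Cq, Cq, Cq]
    have eR : ∑ j ∈ range b, (C ((a : ℤ) + j) a : ℚ) * (C ((c : ℤ) + j) ((c : ℤ) - 1) : ℚ)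
        = ∑ j ∈ range b, ((a+j).choose a : ℚ) * ((c+j).choose (c-1) : ℚ) := by
      apply Finset.sum_congr rfl
      intro j _
      rw [show (a:ℤ) + j = ((a+j : ℕ) : ℤ) by push_cast; ring,
        show (c:ℤ) + j = ((c+j : ℕ) : ℤ) by push_cast; ring,
        show (c:ℤ) - 1 = ((c-1 : ℕ) : ℤ) by
          have : ((c-1 : ℕ) : ℤ) = (c:ℤ) - 1 := by
            push_cast [Nat.cast_sub hc]
            ring
          omega,
        Cq, Cq]
    rw [eL, eR,
      show (a:ℤ) + b = ((a+b : ℕ) : ℤ) by push_cast; ring,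
      show (b:ℤ) + c = ((b+c : ℕ) : ℤ) by push_cast; ring,
      show (c:ℤ) + a = ((c+a : ℕ) : ℤ) by push_cast; ring,
      show 2 * (a:ℤ) = ((2*a : ℕ) : ℤ) by push_cast; ring,
      show 2 * (b:ℤ) = ((2*b : ℕ) : ℤ) by push_cast; ring,
      show 2 * (c:ℤ) = ((2*c : ℕ) : ℤ) by push_cast; ring,
      Cq, Cq, Cq, Cq, Cq, Cq]
    -- now pure choose statement
    have hD : (((2*a).choose a : ℚ) * ((2*b).choose b : ℚ) * ((2*c).choose c : ℚ)) ≠ 0 := by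
      have h1 : 0 < (2*a).choose a := Nat.choose_pos (by omega)
      have h2 : 0 < (2*b).choose b := Nat.choose_pos (by omega)
      have h3 : 0 < (2*c).choose c := Nat.choose_pos (by omega)
      positivity
    have hsum : (((a+b).choose a : ℚ) * ((b+c).choose b : ℚ) * ((c+a).choose c : ℚ)) *
        (∑ k ∈ range (a + 1),
          (k : ℚ) * ((2*a).choose (a+k) : ℚ) * ((2*b).choose (b+k) : ℚ) * ((2*c).choose (c+k) : ℚ))
        = (((2*a).choose a : ℚ) * ((2*b).choose b : ℚ) * ((2*c).choose c : ℚ)) *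
        (∑ k ∈ range (a + 1),
          (k : ℚ) * ((a+b).choose (a+k) : ℚ) * ((b+c).choose (b+k) : ℚ) * ((c+a).choose (c+k) : ℚ)) := by
      rw [Finset.mul_sum, Finset.mul_sum]
      apply Finset.sum_congr rfl
      intro k hk
      have hka : k ≤ a := by
        have := Finset.mem_range.mp hk; omega
      have hp := pre a b c k hka
      linear_combination (k:ℚ) * hp
    rw [div_mul_eq_mul_div, hsum, mul_div_cancel_left₀ _ hD]
    linear_combination (clean a c hc b) / 2
end

section
/- For non-negative integers n and m with m ≥ n, C(n+m,2n)·∑_{k=0}^{n} k·C(2n,n+k)^2·C(2m,m+k) = (n/2)·C(2m,m+n)·C(2n,n)·∑_{j=0}^{m-1} C(n+j,n)·C(n+j,n-1). -/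
open Finset

lemma abs1 (N j : ℕ) : ((N:ℚ) - j) * N.choose j = ((j:ℚ)+1) * N.choose (j+1) := by
  rcases lt_or_ge j N with h | h
  · have := Nat.choose_succ_right_eq N j
    have h2 : (N.choose (j+1) * (j+1) : ℚ) = N.choose j * ((N - j : ℕ) : ℚ) := by
      exact_mod_cast congrArg (Nat.cast : ℕ → ℚ) this
    rw [Nat.cast_sub h.le] at h2
    linarith [h2]
  · rcases eq_or_lt_of_le h with rfl | h'
    · simp [Nat.choose_succ_self]
    · simp [Nat.choose_eq_zero_of_lt h', Nat.choose_eq_zero_of_lt (Nat.lt_succ_of_lt h')]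

lemma abs2 (N j : ℕ) : ((N:ℚ) + 1 - j) * (N+1).choose j = ((N:ℚ)+1) * N.choose j := by
  rcases le_or_gt j (N+1) with h | h
  · have := Nat.choose_mul_succ_eq N j
    have h2 : ((N.choose j : ℚ)) * (N+1) = (N+1).choose j * ((N+1-j : ℕ) : ℚ) := by
      exact_mod_cast congrArg (Nat.cast : ℕ → ℚ) this
    rw [Nat.cast_sub h] at h2
    push_cast at h2 ⊢
    linarith [h2]
  · simp [Nat.choose_eq_zero_of_lt h, Nat.choose_eq_zero_of_lt (by omega : N < j)]

lemma abs3 (N j : ℕ) : ((j:ℚ)+1) * (N+1).choose (j+1) = ((N:ℚ)+1) * N.choose j := by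
  have := Nat.add_one_mul_choose_eq N j
  have h2 : ((N+1 : ℕ) * N.choose j : ℚ) = ((N+1).choose (j+1) * (j+1) : ℕ) := by
    exact_mod_cast congrArg (Nat.cast : ℕ → ℚ) this
  push_cast at h2
  linarith [h2]

lemma E4 (m k : ℕ) : ((m:ℚ)+1+k) * ((m:ℚ)+1-k) * (2*m+2).choose (m+1+k)
    = (2*(m:ℚ)+1) * (2*m+2) * (2*m).choose (m+k) := by
  have h1 := abs3 (2*m+1) (m+k)
  have h2 := abs2 (2*m) (m+k)
  have e1 : 2*m+1+1 = 2*m+2 := by ring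
  have e2 : m+k+1 = m+1+k := by ring
  rw [e1, e2] at h1
  push_cast at h1 h2 ⊢
  nlinarith [h1, h2]

lemma star_s5 (n m : ℕ) :
    ((m:ℚ)+n+1)^2 * (∑ k ∈ range (n+1),
        (k:ℚ) * ((2*n).choose (n+k) : ℚ)^2 * ((2*m+2).choose (m+1+k) : ℚ)) =
    (2*(m:ℚ)+1)*(2*(m:ℚ)+2) * (∑ k ∈ range (n+1),
        (k:ℚ) * ((2*n).choose (n+k) : ℚ)^2 * ((2*m).choose (m+k) : ℚ))
      + (1/2) * (n:ℚ)^2 * ((m:ℚ)+1) * ((2*n).choose n : ℚ)^2 * ((2*m+2).choose (m+1) : ℚ) := by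
  set φ : ℕ → ℚ := fun k =>
    ((n:ℚ)+k)^2*((m:ℚ)+1+k)*((2*n).choose (n+k) : ℚ)^2*((2*m+2).choose (m+1+k) : ℚ) with hφ
  have tele : ∑ k ∈ range (n+1), (φ k - φ (k+1)) = φ 0 - φ (n+1) :=
    Finset.sum_range_sub' φ (n+1)
  have per : ∀ k ∈ range (n+1),
      ((m:ℚ)+n+1)^2 * ((k:ℚ) * ((2*n).choose (n+k) : ℚ)^2 * ((2*m+2).choose (m+1+k) : ℚ))
      - (2*(m:ℚ)+1)*(2*(m:ℚ)+2) * ((k:ℚ) * ((2*n).choose (n+k) : ℚ)^2 * ((2*m).choose (m+k) : ℚ))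
      = (1/2) * (φ k - φ (k+1)) := by
    intro k _
    have h4 := E4 m k
    have h1 := abs1 (2*n) (n+k)
    have h3 := abs1 (2*m+2) (m+1+k)
    simp only [hφ]
    set a : ℚ := ((2*n).choose (n+k) : ℚ)
    set a' : ℚ := ((2*n).choose (n+k+1) : ℚ)
    set B : ℚ := ((2*m+2).choose (m+1+k) : ℚ)
    set B' : ℚ := ((2*m+2).choose (m+1+k+1) : ℚ)
    have ea : (2*n).choose (n+(k+1)) = (2*n).choose (n+k+1) := by ring_nf
    have eb : (2*m+2).choose (m+1+(k+1)) = (2*m+2).choose (m+1+k+1) := by ring_nf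
    rw [ea, eb]
    push_cast at h1 h3 h4 ⊢
    linear_combination ((k:ℚ)*a^2) * h4
      - (1/2)*(((n:ℚ)-k)*a + ((n:ℚ)+k+1)*a')*((m:ℚ)+k+2)*B' * h1
      - (1/2)*((n:ℚ)-k)^2*a^2 * h3
  rw [Finset.mul_sum, Finset.mul_sum, ← sub_eq_iff_eq_add', ← Finset.sum_sub_distrib]
  rw [Finset.sum_congr rfl per, ← Finset.mul_sum, tele]
  have hz : (2*n).choose (n+(n+1)) = 0 := Nat.choose_eq_zero_of_lt (by omega)
  simp [hφ, hz]
  ring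

lemma Fid (n m : ℕ) (hn : 1 ≤ n) :
    (∑ k ∈ range (n+1), (k:ℚ) * ((2*n).choose (n+k) : ℚ)^2 * ((2*m).choose (m+k) : ℚ))
      * ((m+n).choose n : ℚ)^2
    = (n:ℚ)/2 * ((2*n).choose n : ℚ)^2 * ((2*m).choose m : ℚ) *
        ∑ j ∈ range m, ((n+j).choose n : ℚ) * ((n+j).choose (n-1) : ℚ) := by
  induction m with
  | zero =>
      have h0 : (∑ k ∈ range (n+1), (k:ℚ) * ((2*n).choose (n+k) : ℚ)^2
          * ((2*0).choose (0+k) : ℚ)) = 0 := by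
        apply Finset.sum_eq_zero
        intro k _
        match k with
        | 0 => simp
        | (j+1) => simp [Nat.choose_eq_zero_of_lt (by omega : 2*0 < 0+(j+1))]
      rw [h0]; simp
  | succ m IH =>
      have Hstar := star_s5 n m
      have H6 := abs2 (m+n) n
      have H40 := E4 m 0
      have H7 := abs1 (n+m) (n-1)
      obtain ⟨n', rfl⟩ : ∃ n', n = n'+1 := ⟨n-1, by omega⟩
      simp only [Nat.add_sub_cancel, Nat.add_zero] at H7 H40 IH ⊢
      simp only [show 2*(m+1) = 2*m+2 from by ring,
        show (m+1)+(n'+1) = m+(n'+1)+1 from by ring,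
        show (n'+1)+m = m+(n'+1) from by ring] at H7 ⊢
      push_cast at Hstar H6 H40 H7 IH ⊢
      set c0 : ℚ := ((2*(n'+1)).choose (n'+1) : ℚ)
      set c1 : ℚ := ((2*m+2).choose (m+1) : ℚ)
      set e : ℚ := ((2*m).choose m : ℚ)
      set d : ℚ := ((m+(n'+1)).choose (n'+1) : ℚ)
      set d' : ℚ := ((m+(n'+1)+1).choose (n'+1) : ℚ)
      set w : ℚ := ((m+(n'+1)).choose n' : ℚ)
      set f0 : ℚ := ∑ k ∈ range ((n'+1)+1),
        (k:ℚ) * (((2*(n'+1)).choose ((n'+1)+k)) : ℚ)^2 * ((2*m).choose (m+k) : ℚ)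
      set f1 : ℚ := ∑ k ∈ range ((n'+1)+1),
        (k:ℚ) * (((2*(n'+1)).choose ((n'+1)+k)) : ℚ)^2 * ((2*m+2).choose (m+1+k) : ℚ)
      set S : ℚ := ∑ j ∈ range m, (((n'+1)+j).choose (n'+1) : ℚ) * (((n'+1)+j).choose n' : ℚ)
        with hS
      conv_rhs => rw [Finset.sum_range_succ]
      rw [show n'+1+m = m+(n'+1) from by ring]
      have hA : (((m:ℚ)+1)^2*((m:ℚ)+((n':ℚ)+1)+1)^2) ≠ 0 := by positivity
      apply mul_left_cancel₀ hA
      linear_combination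
          (((m:ℚ)+((n':ℚ)+1)+1)^2*f1*(((m:ℚ)+1)*d'+((m:ℚ)+((n':ℚ)+1)+1)*d)) * H6
        + (((m:ℚ)+((n':ℚ)+1)+1)^2*d^2) * Hstar
        + ((2*(m:ℚ)+1)*(2*(m:ℚ)+2)*((m:ℚ)+((n':ℚ)+1)+1)^2) * IH
        - ((((n':ℚ)+1)/2)*((m:ℚ)+((n':ℚ)+1)+1)^2*c0^2*S) * H40
        - ((((n':ℚ)+1)/2)*((m:ℚ)+1)*((m:ℚ)+((n':ℚ)+1)+1)^2*c0^2*c1*d) * H7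

lemma Xid (n m : ℕ) (h : n ≤ m) :
    ((n+m).choose (2*n) : ℚ) * ((2*n).choose n : ℚ) * ((2*m).choose m : ℚ)
      = ((2*m).choose (m+n) : ℚ) * ((m+n).choose n : ℚ)^2 := by
  obtain ⟨s, rfl⟩ : ∃ s, m = n + s := ⟨m - n, by omega⟩
  rw [show n+(n+s) = 2*n+s from by ring, show 2*(n+s) = 2*n+2*s from by ring,
    show (n+s)+n = 2*n+s from by ring]
  rw [Nat.cast_choose ℚ (by omega : 2*n ≤ 2*n+s),
      Nat.cast_choose ℚ (by omega : n ≤ 2*n),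
      Nat.cast_choose ℚ (by omega : n+s ≤ 2*n+2*s),
      Nat.cast_choose ℚ (by omega : 2*n+s ≤ 2*n+2*s),
      Nat.cast_choose ℚ (by omega : n ≤ 2*n+s)]
  rw [show 2*n+s-2*n = s from by omega, show 2*n-n = n from by omega,
      show 2*n+2*s-(n+s) = n+s from by omega, show 2*n+2*s-(2*n+s) = s from by omega,
      show 2*n+s-n = n+s from by omega]
  have h1 := Nat.factorial_pos s
  have h2 := Nat.factorial_pos n
  have h3 := Nat.factorial_pos (n+s)
  have h4 := Nat.factorial_pos (2*n+s)
  field_simp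

lemma C_cast (a b : ℕ) : ((C (a:ℤ) (b:ℤ) : ℤ) : ℚ) = (a.choose b : ℚ) := by
  unfold C
  by_cases hc : (b:ℤ) ≤ (a:ℤ)
  · simp [hc]
  · have hb : a < b := by exact_mod_cast not_le.mp hc
    simp [hc, Nat.choose_eq_zero_of_lt hb]

theorem stmt_5 (n m : ℕ) (h : n ≤ m) :
    (C ((n : ℤ) + m) (2 * n) : ℚ) *
        ∑ k ∈ range (n + 1),
          (k : ℚ) * (C (2 * (n : ℤ)) ((n : ℤ) + k) : ℚ) ^ 2 *
            (C (2 * (m : ℤ)) ((m : ℤ) + k) : ℚ) =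
      (n : ℚ) / 2 * (C (2 * (m : ℤ)) ((m : ℤ) + n) : ℚ) * (C (2 * (n : ℤ)) n : ℚ) *
        ∑ j ∈ range m, (C ((n : ℤ) + j) n : ℚ) * (C ((n : ℤ) + j) ((n : ℤ) - 1) : ℚ) := by
  rcases n with _ | n'
  · simp
  · set n := n' + 1 with hn
    have harg1 : ((n:ℤ) + m) = ((n+m : ℕ) : ℤ) := by push_cast; ring
    have harg2 : (2 * (n:ℤ)) = ((2*n : ℕ) : ℤ) := by push_cast; ring
    have harg3 : (2 * (m:ℤ)) = ((2*m : ℕ) : ℤ) := by push_cast; ring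
    have harg4 : ∀ k : ℕ, ((n:ℤ) + k) = ((n+k : ℕ) : ℤ) := by intro k; push_cast; ring
    have harg5 : ∀ k : ℕ, ((m:ℤ) + k) = ((m+k : ℕ) : ℤ) := by intro k; push_cast; ring
    have harg6 : ((n:ℤ) - 1) = ((n' : ℕ) : ℤ) := by push_cast [hn]; ring
    have harg7 : ((n:ℤ)) = ((n : ℕ) : ℤ) := rfl
    simp only [harg1, harg2, harg3, harg4, harg5, harg6, harg7, C_cast]
    have hF := Fid n m (by omega)
    rw [show n - 1 = n' from by omega] at hF
    have hX := Xid n m h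
    have hd : ((m+n).choose n : ℚ) ≠ 0 := by
      have := Nat.choose_pos (by omega : n ≤ m+n)
      positivity
    apply mul_right_cancel₀ (pow_ne_zero 2 hd)
    linear_combination ((n+m).choose (2*n) : ℚ) * hF
      + ((n:ℚ)/2) * ((2*n).choose n : ℚ)
        * (∑ j ∈ range m, ((n+j).choose n : ℚ) * ((n+j).choose n' : ℚ)) * hX
end

section
/- For non-negative integers n and m, C(n+m,m)·∑_{k=0}^{n} k·C(2n,n+k)·C(2m,m+k)^2 = (n/2)·C(2n,n)·C(2m,m)·∑_{j=0}^{m-1} C(n+j,n)·C(m+j,m-1). -/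
open Finset

namespace SunAux



def ch (a b : ℕ) : ℚ := (a.choose b : ℚ)

lemma ch_eq_zero {a b : ℕ} (h : a < b) : ch a b = 0 := by
  simp [ch, Nat.choose_eq_zero_of_lt h]

lemma q1 (a b : ℕ) : ((b:ℚ)+1) * ch (a+1) (b+1) = ((a:ℚ)+1) * ch a b := by
  have h := Nat.add_one_mul_choose_eq a b
  have h2 := congrArg (Nat.cast (R := ℚ)) h
  push_cast at h2
  unfold ch
  linear_combination -h2

lemma q2 (a b : ℕ) : ((b:ℚ)+1) * ch a (b+1) = ((a:ℚ)-b) * ch a b := by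
  rcases le_or_gt b a with h | h
  · have hh := Nat.choose_succ_right_eq a b
    have h2 := congrArg (Nat.cast (R := ℚ)) hh
    push_cast [Nat.cast_sub h] at h2
    unfold ch
    linear_combination h2
  · rw [ch_eq_zero h, ch_eq_zero (by omega)]
    ring

lemma q3 (a b : ℕ) : ((a:ℚ)+1-b) * ch (a+1) b = ((a:ℚ)+1) * ch a b := by
  cases b with
  | zero => norm_num [ch]
  | succ b =>
    have hb : ((b:ℚ)+1) ≠ 0 := by positivity
    apply mul_left_cancel₀ hb
    push_cast
    linear_combination ((a:ℚ)-b) * q1 a b - ((a:ℚ)+1) * q2 a b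

lemma Lgen (n k : ℕ) :
    ((n:ℚ)+1+k) * ((n:ℚ)+1-k) * ch (2*n+2) (n+1+k)
      = (2*(n:ℚ)+1) * (2*(n:ℚ)+2) * ch (2*n) (n+k) := by
  have h1 := q3 (2*n+1) (n+1+k)
  have h2 := q1 (2*n) (n+k)
  rw [show 2*n+1+1 = 2*n+2 by omega] at h1
  rw [show n+k+1 = n+1+k by omega] at h2
  push_cast at h1 h2
  linear_combination ((n:ℚ)+1+k) * h1 + (2*(n:ℚ)+2) * h2

lemma Lmul (n m : ℕ) : ((n:ℚ)+1) * ch (n+1+m) m = ((n:ℚ)+m+1) * ch (n+m) m := by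
  have hs1 : ch (n+1+m) m = ch (n+1+m) (n+1) := by
    unfold ch
    rw [← Nat.choose_symm (Nat.le_add_left m (n+1)), show n+1+m-m = n+1 by omega]
  have hs2 : ch (n+m) m = ch (n+m) n := by
    unfold ch
    rw [← Nat.choose_symm (Nat.le_add_left m n), show n+m-m = n by omega]
  have h := q1 (n+m) n
  rw [show n+m+1 = n+1+m by omega] at h
  push_cast at h
  rw [hs1, hs2]
  linear_combination h


noncomputable def gfun (n m k : ℕ) : ℚ :=
  (-(k:ℚ)) * ((k:ℚ)-1) * ((k:ℚ)+m)^2 * ((k:ℚ)+n+2) * ((n:ℚ)+m+1)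
    / (2*((n:ℚ)+1)*((n:ℚ)+2))
    * (ch (n+m) m * ch (2*n+4) (n+2+k) * ch (2*m) (m+k)^2)


lemma star (n m k : ℕ) :
    4*(2*(n:ℚ)+1)*(2*(n:ℚ)+3)*((n:ℚ)+(m:ℚ)+1)
        * (ch (n+m) m * (k:ℚ) * ch (2*n) (n+k) * ch (2*m) (m+k)^2)
      - 2*(2*(n:ℚ)+3)*((m:ℚ)^2+2*((n:ℚ)+1)*(m:ℚ)+((n:ℚ)+1)*(2*(n:ℚ)+3))
        * (ch (n+1+m) m * (k:ℚ) * ch (2*n+2) (n+1+k) * ch (2*m) (m+k)^2)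
      + ((n:ℚ)+1)*((n:ℚ)+2)*((n:ℚ)+(m:ℚ)+2)
        * (ch (n+2+m) m * (k:ℚ) * ch (2*n+4) (n+2+k) * ch (2*m) (m+k)^2)
    = gfun n m (k+1) - gfun n m k := by
  have hL1 := Lmul n m
  have hL2 := Lmul (n+1) m
  rw [show n+1+1+m = n+2+m by omega] at hL2
  push_cast at hL2
  have hL3 := Lgen n k
  have hL4 := Lgen (n+1) k
  rw [show 2*(n+1)+2 = 2*n+4 by omega, show n+1+1+k = n+2+k by omega,
      show 2*(n+1) = 2*n+2 by omega, show n+1+k = n+1+k from rfl] at hL4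
  push_cast at hL4
  have hL5 := q2 (2*n+4) (n+2+k)
  rw [show n+2+k+1 = n+3+k by omega] at hL5
  push_cast at hL5
  have hL6 := q2 (2*m) (m+k)
  push_cast at hL6
  -- solved forms
  have ha1 : ch (n+1+m) m = ((n:ℚ)+m+1) * ch (n+m) m / ((n:ℚ)+1) := by
    rw [eq_div_iff (by positivity)]; linear_combination hL1
  have ha2 : ch (n+2+m) m = ((n:ℚ)+m+2) * ch (n+1+m) m / ((n:ℚ)+2) := by
    rw [eq_div_iff (by positivity)]; linear_combination hL2
  have hx : ch (2*n) (n+k) = ((n:ℚ)+1+k)*((n:ℚ)+1-k)*ch (2*n+2) (n+1+k)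
      / ((2*(n:ℚ)+1)*(2*(n:ℚ)+2)) := by
    rw [eq_div_iff (by positivity)]; linear_combination -hL3
  have hx1 : ch (2*n+2) (n+1+k) = ((n:ℚ)+2+k)*((n:ℚ)+2-k)*ch (2*n+4) (n+2+k)
      / ((2*(n:ℚ)+3)*(2*(n:ℚ)+4)) := by
    rw [eq_div_iff (by positivity)]; linear_combination -hL4
  have hx3 : ch (2*n+4) (n+3+k) = ((n:ℚ)+2-k)*ch (2*n+4) (n+2+k) / ((n:ℚ)+3+k) := by
    rw [eq_div_iff (by positivity)]; linear_combination hL5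
  have hy1 : ch (2*m) (m+k+1) = ((m:ℚ)-k)*ch (2*m) (m+k) / ((m:ℚ)+1+k) := by
    rw [eq_div_iff (by positivity)]; linear_combination hL6
  unfold gfun
  rw [show n+2+(k+1) = n+3+k by omega, show m+(k+1) = m+k+1 by omega]
  push_cast
  rw [hx, hx1, hx3, hy1, ha2, ha1]
  have c1 : (2*(n:ℚ)+1) ≠ 0 := by positivity
  have c2 : (2*(n:ℚ)+2) ≠ 0 := by positivity
  have c3 : (2*(n:ℚ)+3) ≠ 0 := by positivity
  have c4 : (2*(n:ℚ)+4) ≠ 0 := by positivity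
  have c5 : ((n:ℚ)+1) ≠ 0 := by positivity
  have c6 : ((n:ℚ)+2) ≠ 0 := by positivity
  have c7 : ((n:ℚ)+3+k) ≠ 0 := by positivity
  have c8 : ((m:ℚ)+1+k) ≠ 0 := by positivity
  field_simp
  ring


noncomputable def LLs (n m : ℕ) : ℚ :=
  ch (n+m) m * ∑ k ∈ range (n+1), (k:ℚ) * ch (2*n) (n+k) * ch (2*m) (m+k)^2


lemma LLs_ext (n m N : ℕ) (hN : n ≤ N) :
    LLs n m = ∑ k ∈ range (N+1),
      ch (n+m) m * (k:ℚ) * ch (2*n) (n+k) * ch (2*m) (m+k)^2 := by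
  unfold LLs
  rw [mul_sum]
  have hsub : range (n+1) ⊆ range (N+1) := by
    intro x hx; simp only [mem_range] at hx ⊢; omega
  have hzero : ∀ x ∈ range (N+1), x ∉ range (n+1) →
      ch (n+m) m * ((x:ℚ) * ch (2*n) (n+x) * ch (2*m) (m+x)^2) = 0 := by
    intro x hx hnx
    simp only [mem_range] at hx hnx
    rw [ch_eq_zero (show 2*n < n+x by omega)]
    ring
  rw [Finset.sum_subset hsub hzero]
  exact Finset.sum_congr rfl fun k _ => by ring


lemma recL (n m : ℕ) :
    4*(2*(n:ℚ)+1)*(2*(n:ℚ)+3)*((n:ℚ)+(m:ℚ)+1) * LLs n m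
      - 2*(2*(n:ℚ)+3)*((m:ℚ)^2+2*((n:ℚ)+1)*(m:ℚ)+((n:ℚ)+1)*(2*(n:ℚ)+3)) * LLs (n+1) m
      + ((n:ℚ)+1)*((n:ℚ)+2)*((n:ℚ)+(m:ℚ)+2) * LLs (n+2) m = 0 := by
  have e0 := LLs_ext n m (n+2) (by omega)
  have e1 := LLs_ext (n+1) m (n+2) (by omega)
  have e2 := LLs_ext (n+2) m (n+2) (by omega)
  simp only [show 2*(n+1) = 2*n+2 by omega, show 2*(n+2) = 2*n+4 by omega] at e1 e2
  rw [e0, e1, e2, mul_sum, mul_sum, mul_sum, ← Finset.sum_sub_distrib,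
    ← Finset.sum_add_distrib]
  have hc : ∀ k ∈ range (n+2+1),
      (4*(2*(n:ℚ)+1)*(2*(n:ℚ)+3)*((n:ℚ)+(m:ℚ)+1)
          * (ch (n+m) m * (k:ℚ) * ch (2*n) (n+k) * ch (2*m) (m+k)^2)
        - 2*(2*(n:ℚ)+3)*((m:ℚ)^2+2*((n:ℚ)+1)*(m:ℚ)+((n:ℚ)+1)*(2*(n:ℚ)+3))
          * (ch (n+1+m) m * (k:ℚ) * ch (2*n+2) (n+1+k) * ch (2*m) (m+k)^2)
        + ((n:ℚ)+1)*((n:ℚ)+2)*((n:ℚ)+(m:ℚ)+2)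
          * (ch (n+2+m) m * (k:ℚ) * ch (2*n+4) (n+2+k) * ch (2*m) (m+k)^2))
      = gfun n m (k+1) - gfun n m k := fun k _ => star n m k
  rw [Finset.sum_congr rfl hc, Finset.sum_range_sub (f := fun k => gfun n m k)]
  have g1 : gfun n m 0 = 0 := by simp [gfun]
  have g2 : gfun n m (n+2+1) = 0 := by
    unfold gfun
    rw [ch_eq_zero (show 2*n+4 < n+2+(n+2+1) by omega)]
    ring
  rw [g1, g2]
  ring

noncomputable def wfun (n mp j : ℕ) : ℚ :=
  2*(2*(n:ℚ)+1)*(2*(n:ℚ)+3)*(j:ℚ)*((j:ℚ)+1)*((j:ℚ)-((mp:ℚ)+1)) / ((n:ℚ)+1)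
    * (ch (2*n) n * ch (2*(mp+1)) (mp+1) * ch (n+j) n * ch (mp+1+j) mp)


lemma starB (n mp j : ℕ) :
    4*(2*(n:ℚ)+1)*(2*(n:ℚ)+3)*((n:ℚ)+((mp:ℚ)+1)+1)
        * ((n:ℚ)/2 * ch (2*n) n * ch (2*(mp+1)) (mp+1) * (ch (n+j) n * ch (mp+1+j) mp))
      - 2*(2*(n:ℚ)+3)*(((mp:ℚ)+1)^2+2*((n:ℚ)+1)*((mp:ℚ)+1)+((n:ℚ)+1)*(2*(n:ℚ)+3))
        * (((n:ℚ)+1)/2 * ch (2*n+2) (n+1) * ch (2*(mp+1)) (mp+1) * (ch (n+1+j) (n+1) * ch (mp+1+j) mp))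
      + ((n:ℚ)+1)*((n:ℚ)+2)*((n:ℚ)+((mp:ℚ)+1)+2)
        * (((n:ℚ)+2)/2 * ch (2*n+4) (n+2) * ch (2*(mp+1)) (mp+1) * (ch (n+2+j) (n+2) * ch (mp+1+j) mp))
    = wfun n mp (j+1) - wfun n mp j := by
  have hu1 := Lgen n 0
  rw [show n+1+0 = n+1 by omega, show n+0 = n by omega] at hu1
  push_cast at hu1
  have hu2 := Lgen (n+1) 0
  rw [show (n+1)+1+0 = n+2 by omega, show (n+1)+0 = n+1 by omega,
      show 2*(n+1)+2 = 2*n+4 by omega, show 2*(n+1) = 2*n+2 by omega] at hu2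
  push_cast at hu2
  have hd1 := q1 (n+j) n
  rw [show n+j+1 = n+1+j by omega] at hd1
  push_cast at hd1
  have hd2 := q1 (n+1+j) (n+1)
  rw [show n+1+j+1 = n+2+j by omega, show (n+1)+1 = n+2 by omega] at hd2
  push_cast at hd2
  have he1 := q3 (n+j) n
  push_cast at he1
  have hc1 := q3 (mp+1+j) mp
  rw [show mp+1+j+1 = mp+2+j by omega] at hc1
  push_cast at hc1
  have hu1s : ch (2*n+2) (n+1) = (2*(n:ℚ)+1)*(2*(n:ℚ)+2)*ch (2*n) n
      / (((n:ℚ)+1)*((n:ℚ)+1)) := by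
    rw [eq_div_iff (by positivity)]; linear_combination hu1
  have hu2s : ch (2*n+4) (n+2) = (2*(n:ℚ)+3)*(2*(n:ℚ)+4)*ch (2*n+2) (n+1)
      / (((n:ℚ)+2)*((n:ℚ)+2)) := by
    rw [eq_div_iff (by positivity)]; linear_combination hu2
  have hd1s : ch (n+1+j) (n+1) = ((n:ℚ)+(j:ℚ)+1)*ch (n+j) n / ((n:ℚ)+1) := by
    rw [eq_div_iff (by positivity)]; linear_combination hd1
  have hd2s : ch (n+2+j) (n+2) = ((n:ℚ)+(j:ℚ)+2)*ch (n+1+j) (n+1) / ((n:ℚ)+2) := by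
    rw [eq_div_iff (by positivity)]; linear_combination hd2
  have he1s : ch (n+j+1) n = ((n:ℚ)+(j:ℚ)+1)*ch (n+j) n / ((j:ℚ)+1) := by
    rw [eq_div_iff (by positivity)]; linear_combination he1
  have hc1s : ch (mp+2+j) mp = (((mp:ℚ)+(j:ℚ)+2))*ch (mp+1+j) mp / ((j:ℚ)+2) := by
    rw [eq_div_iff (by positivity)]; linear_combination hc1
  unfold wfun
  rw [show n+(j+1) = n+j+1 by omega, show mp+1+(j+1) = mp+2+j by omega]
  push_cast
  rw [hd2s, hd1s, hu2s, hu1s, he1s, hc1s]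
  have c1 : ((n:ℚ)+1) ≠ 0 := by positivity
  have c2 : ((n:ℚ)+2) ≠ 0 := by positivity
  have c3 : ((j:ℚ)+1) ≠ 0 := by positivity
  have c4 : ((j:ℚ)+2) ≠ 0 := by positivity
  field_simp
  ring


noncomputable def RRs (n m : ℕ) : ℚ :=
  (n:ℚ)/2 * ch (2*n) n * ch (2*m) m * ∑ j ∈ range m, ch (n+j) n * ch (m+j) (m-1)


lemma recR (n m : ℕ) :
    4*(2*(n:ℚ)+1)*(2*(n:ℚ)+3)*((n:ℚ)+(m:ℚ)+1) * RRs n m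
      - 2*(2*(n:ℚ)+3)*((m:ℚ)^2+2*((n:ℚ)+1)*(m:ℚ)+((n:ℚ)+1)*(2*(n:ℚ)+3)) * RRs (n+1) m
      + ((n:ℚ)+1)*((n:ℚ)+2)*((n:ℚ)+(m:ℚ)+2) * RRs (n+2) m = 0 := by
  cases m with
  | zero => simp [RRs]
  | succ mp =>
    unfold RRs
    simp only [Nat.add_sub_cancel, show 2*(n+1) = 2*n+2 by omega,
      show 2*(n+2) = 2*n+4 by omega, show (n+1)+1 = n+2 by omega]
    push_cast
    rw [mul_sum, mul_sum, mul_sum, mul_sum, mul_sum, mul_sum,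
      ← Finset.sum_sub_distrib, ← Finset.sum_add_distrib]
    have hc : ∀ j ∈ range (mp+1),
        (4*(2*(n:ℚ)+1)*(2*(n:ℚ)+3)*((n:ℚ)+((mp:ℚ)+1)+1)
          * ((n:ℚ)/2 * ch (2*n) n * ch (2*(mp+1)) (mp+1) * (ch (n+j) n * ch (mp+1+j) mp))
        - 2*(2*(n:ℚ)+3)*(((mp:ℚ)+1)^2+2*((n:ℚ)+1)*((mp:ℚ)+1)+((n:ℚ)+1)*(2*(n:ℚ)+3))
          * (((n:ℚ)+1)/2 * ch (2*n+2) (n+1) * ch (2*(mp+1)) (mp+1) * (ch (n+1+j) (n+1) * ch (mp+1+j) mp))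
        + ((n:ℚ)+1)*((n:ℚ)+2)*((n:ℚ)+((mp:ℚ)+1)+2)
          * (((n:ℚ)+2)/2 * ch (2*n+4) (n+2) * ch (2*(mp+1)) (mp+1) * (ch (n+2+j) (n+2) * ch (mp+1+j) mp)))
        = wfun n mp (j+1) - wfun n mp j := fun j _ => starB n mp j
    rw [Finset.sum_congr rfl hc, Finset.sum_range_sub (f := fun j => wfun n mp j)]
    have w0 : wfun n mp 0 = 0 := by simp [wfun]
    have w1 : wfun n mp (mp+1) = 0 := by
      unfold wfun
      push_cast
      ring
    rw [w0, w1]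
    ring

lemma base0 (m : ℕ) : LLs 0 m = RRs 0 m := by
  simp [LLs, RRs]


lemma tele (mp t : ℕ) :
    ((mp:ℚ)+2) * ∑ j ∈ range t, ((j:ℚ)+1) * ch (mp+1+j) mp
      = (t:ℚ)*((t:ℚ)+1)*ch (mp+1+t) mp := by
  induction t with
  | zero => simp
  | succ t ih =>
    rw [sum_range_succ]
    have hc1 := q3 (mp+1+t) mp
    rw [show mp+1+t+1 = mp+1+(t+1) by omega] at hc1
    push_cast at hc1
    push_cast
    linear_combination ih - ((t:ℚ)+1) * hc1


lemma base1 (m : ℕ) : LLs 1 m = RRs 1 m := by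
  cases m with
  | zero =>
    norm_num [LLs, RRs, ch, Finset.sum_range_succ]
  | succ mp =>
    unfold LLs RRs
    simp only [Nat.add_sub_cancel]
    rw [sum_range_succ, sum_range_one]
    have hsum : ∑ j ∈ range (mp+1), ch (1+j) 1 * ch (mp+1+j) mp
        = ∑ j ∈ range (mp+1), ((j:ℚ)+1) * ch (mp+1+j) mp := by
      refine sum_congr rfl fun j _ => ?_
      unfold ch
      rw [Nat.choose_one_right]
      push_cast
      ring
    rw [hsum]
    have ht := tele mp (mp+1)
    rw [show mp+1+(mp+1) = 2*mp+2 by omega] at ht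
    push_cast at ht
    have hmp2 : ((mp:ℚ)+2) ≠ 0 := by positivity
    have hS : ∑ j ∈ range (mp+1), ((j:ℚ)+1) * ch (mp+1+j) mp
        = ((mp:ℚ)+1)*((mp:ℚ)+2)*ch (2*mp+2) mp / ((mp:ℚ)+2) := by
      rw [eq_div_iff hmp2]; linear_combination ht
    rw [hS]
    have hv : ch (1+(mp+1)) (mp+1) = (mp:ℚ)+2 := by
      unfold ch
      rw [show 1+(mp+1) = (mp+1)+1 by omega, Nat.choose_succ_self_right]
      push_cast; ring
    rw [hv]
    have h1 := q2 (2*mp+2) (mp+1)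
    rw [show (mp+1)+1 = mp+2 by omega] at h1
    push_cast at h1
    have h2 := q2 (2*mp+2) mp
    rw [show mp+1 = mp+1 from rfl] at h2
    push_cast at h2
    -- h1 : (mp+2) * ch (2mp+2) (mp+2) = (mp+1) * ch (2mp+2) (mp+1)
    -- h2 : (mp+1) * ch (2mp+2) (mp+1) = (mp+2) * ch (2mp+2) mp
    have hy1 : ch (2*mp+2) (mp+2) = ((mp:ℚ)+1) * ch (2*mp+2) (mp+1) / ((mp:ℚ)+2) := by
      rw [eq_div_iff hmp2]; linear_combination h1
    have hc2 : ch (2*mp+2) mp = ((mp:ℚ)+1) * ch (2*mp+2) (mp+1) / ((mp:ℚ)+2) := by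
      rw [eq_div_iff hmp2]; linear_combination -h2
    -- normalize goal indices
    simp only [show 2*(mp+1) = 2*mp+2 by omega, show (mp+1)+1 = mp+2 by omega]
    push_cast
    rw [hy1, hc2]
    norm_num [ch]
    field_simp


lemma keyAll (n m : ℕ) : LLs n m = RRs n m := by
  have H : ∀ n, (∀ m, LLs n m = RRs n m) ∧ (∀ m, LLs (n+1) m = RRs (n+1) m) := by
    intro n
    induction n with
    | zero => exact ⟨base0, base1⟩
    | succ n ih =>
      refine ⟨ih.2, fun m => ?_⟩
      have h1 := recL n m
      have h2 := recR n m
      have e0 := ih.1 m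
      have e1 := ih.2 m
      have hkey : ((n:ℚ)+1)*((n:ℚ)+2)*((n:ℚ)+(m:ℚ)+2) * (LLs (n+2) m - RRs (n+2) m) = 0 := by
        linear_combination h1 - h2
          - (4*(2*(n:ℚ)+1)*(2*(n:ℚ)+3)*((n:ℚ)+(m:ℚ)+1)) * e0
          + (2*(2*(n:ℚ)+3)*((m:ℚ)^2+2*((n:ℚ)+1)*(m:ℚ)+((n:ℚ)+1)*(2*(n:ℚ)+3))) * e1
      have hne : ((n:ℚ)+1)*((n:ℚ)+2)*((n:ℚ)+(m:ℚ)+2) ≠ 0 := by positivity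
      have h3 := sub_eq_zero.mp ((mul_eq_zero.mp hkey).resolve_left hne)
      rw [show n+1+1 = n+2 by omega]
      exact h3
  exact (H n).1 m

lemma CQ (a b : ℕ) : ((C (a:ℤ) (b:ℤ)) : ℚ) = ch a b := by
  unfold C ch
  by_cases h : (b:ℤ) ≤ (a:ℤ)
  · rw [if_pos ⟨Int.natCast_nonneg b, h⟩]
    simp
  · rw [if_neg (by tauto)]
    have hba : a < b := by exact_mod_cast not_le.mp h
    simp [Nat.choose_eq_zero_of_lt hba]


lemma CQ' {x y : ℤ} (a b : ℕ) (hx : x = (a:ℤ)) (hy : y = (b:ℤ)) :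
    ((C x y : ℤ) : ℚ) = ch a b := by
  subst hx; subst hy; exact CQ a b



end SunAux


open SunAux in
theorem stmt_6 (n m : ℕ) :
    (C ((n : ℤ) + m) m : ℚ) *
        ∑ k ∈ range (n + 1),
          (k : ℚ) * (C (2 * (n : ℤ)) ((n : ℤ) + k) : ℚ) *
            (C (2 * (m : ℤ)) ((m : ℤ) + k) : ℚ) ^ 2 =
      (n : ℚ) / 2 * (C (2 * (n : ℤ)) n : ℚ) * (C (2 * (m : ℤ)) m : ℚ) *
        ∑ j ∈ range m, (C ((n : ℤ) + j) n : ℚ) * (C ((m : ℤ) + j) ((m : ℤ) - 1) : ℚ) := by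
  have key := keyAll n m
  unfold LLs RRs at key
  have hL : (C ((n : ℤ) + m) m : ℚ) *
      ∑ k ∈ range (n + 1),
        (k : ℚ) * (C (2 * (n : ℤ)) ((n : ℤ) + k) : ℚ) *
          (C (2 * (m : ℤ)) ((m : ℤ) + k) : ℚ) ^ 2
      = ch (n+m) m * ∑ k ∈ range (n+1), (k:ℚ) * ch (2*n) (n+k) * ch (2*m) (m+k)^2 := by
    rw [CQ' (n+m) m (by push_cast; ring) (by push_cast; ring)]
    congr 1
    refine sum_congr rfl fun k _ => ?_
    rw [CQ' (2*n) (n+k) (by push_cast; ring) (by push_cast; ring),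
        CQ' (2*m) (m+k) (by push_cast; ring) (by push_cast; ring)]
  have hR : (n : ℚ) / 2 * (C (2 * (n : ℤ)) n : ℚ) * (C (2 * (m : ℤ)) m : ℚ) *
      ∑ j ∈ range m, (C ((n : ℤ) + j) n : ℚ) * (C ((m : ℤ) + j) ((m : ℤ) - 1) : ℚ)
      = (n:ℚ)/2 * ch (2*n) n * ch (2*m) m * ∑ j ∈ range m, ch (n+j) n * ch (m+j) (m-1) := by
    rw [CQ' (2*n) n (by push_cast; ring) (by push_cast; ring),
        CQ' (2*m) m (by push_cast; ring) (by push_cast; ring)]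
    congr 1
    refine sum_congr rfl fun j hj => ?_
    have hm : 1 ≤ m := by
      have := mem_range.mp hj; omega
    rw [CQ' (n+j) n (by push_cast; ring) (by push_cast; ring),
        CQ' (m+j) (m-1) (by push_cast; ring)
          (by rw [Nat.cast_sub hm]; push_cast; ring)]
  rw [hL, hR]
  exact key
end

section
/- For every positive integer n, ∑_{k=0}^{n} k^3·C(2n,n+k)^3 = (1/2)·∑_{j=0}^{n-1} 3·n^4·C(2n,n)·C(n+j,n)^2 / ((n+2j)·(n+2j+2)). -/
open Finset

private lemma castA (N r : ℕ) : ((N:ℚ)+1-r) * ((N+1).choose r) = ((N:ℚ)+1) * (N.choose r) := by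
  rcases le_or_gt r (N+1) with h | h
  · have := Nat.choose_mul_succ_eq N r
    have hc : ((N + 1 - r : ℕ) : ℚ) = (N:ℚ)+1-r := by
      push_cast [Nat.cast_sub h]; ring
    calc ((N:ℚ)+1-r) * ((N+1).choose r) = (((N+1).choose r : ℕ) * ((N+1-r : ℕ)) : ℕ) := by
          rw [Nat.cast_mul, hc]; ring
      _ = ((N.choose r * (N+1) : ℕ) : ℚ) := by rw [← this]
      _ = ((N:ℚ)+1) * (N.choose r) := by push_cast; ring
  · rw [Nat.choose_eq_zero_of_lt h, Nat.choose_eq_zero_of_lt (by omega)]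
    simp

private lemma castB (N r : ℕ) : ((N:ℚ)+1) * (N.choose r) = ((r:ℚ)+1) * ((N+1).choose (r+1)) := by
  have h := Nat.add_one_mul_choose_eq N r
  have h2 : ((N+1) * N.choose r : ℕ) = ((N+1).choose (r+1) * (r+1) : ℕ) := h
  have := congrArg (Nat.cast (R := ℚ)) h2
  push_cast at this
  linarith

private lemma castC (N r : ℕ) : ((N:ℚ)-r) * (N.choose r) = ((r:ℚ)+1) * (N.choose (r+1)) := by
  rcases le_or_gt r N with h | h
  · have := Nat.choose_succ_right_eq N r
    have hc : ((N - r : ℕ) : ℚ) = (N:ℚ)-r := by push_cast [Nat.cast_sub h]; ring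
    calc ((N:ℚ)-r) * (N.choose r) = ((N.choose r * (N - r) : ℕ) : ℚ) := by
          rw [Nat.cast_mul, hc]; ring
      _ = ((N.choose (r+1) * (r+1) : ℕ) : ℚ) := by rw [this]
      _ = ((r:ℚ)+1) * (N.choose (r+1)) := by push_cast; ring
  · rw [Nat.choose_eq_zero_of_lt h, Nat.choose_eq_zero_of_lt (by omega)]
    simp

private noncomputable def LL (n : ℕ) : ℚ :=
  ∑ k ∈ range (n+1), (k:ℚ)^3 * (((2*n).choose (n+k) : ℕ) : ℚ)^3

private noncomputable def UU (m : ℕ) : ℚ :=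
  ∑ j ∈ range (m+1), (((m+j).choose j : ℕ) : ℚ)^2

private lemma Urec (m : ℕ) : 8*(2*(m:ℚ)+3) * UU (m+1)
    = 4*((m:ℚ)+1) * UU m + (21*(m:ℚ)+29) * (((2*m+2).choose (m+1) : ℕ) : ℚ)^2 := by
  set c : ℕ → ℚ := fun j => (((m+j).choose j : ℕ) : ℚ) with hc
  set d : ℕ → ℚ := fun j => (((m+1+j).choose j : ℕ) : ℚ) with hd
  set V : ℕ → ℚ := fun j => (j:ℚ)^2*(3*(m:ℚ)+3+2*(j:ℚ))*(c j)^2 with hV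
  have hstep : ∀ j : ℕ, ((j:ℚ)+1) * c (j+1) = ((m:ℚ)+j+1) * c j := by
    intro j
    have h := castB (m+j) j
    have : c (j+1) = (((m+j+1).choose (j+1) : ℕ) : ℚ) := rfl
    rw [this]
    push_cast at h ⊢
    linarith
  have key : ∀ j : ℕ, V (j+1) - V j
      = (2*(2*(m:ℚ)+3)*((m:ℚ)+1+j)^2 - ((m:ℚ)+1)^3) * (c j)^2 := by
    intro j
    have hs := hstep j
    simp only [hV]
    push_cast
    linear_combination ((3*(m:ℚ)+2*j+5)*(((j:ℚ)+1)*c (j+1) + ((m:ℚ)+j+1)*c j)) * hs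
  have hconv : ∀ j : ℕ, ((m:ℚ)+1+j)*(c j) = ((m:ℚ)+1)*(d j) := by
    intro j
    have h := castA (m+j) j
    have e1 : m+j+1 = m+1+j := by omega
    rw [e1] at h
    push_cast at h ⊢
    linarith
  have tele : ∑ j ∈ range (m+2),
      ((2*(2*(m:ℚ)+3)*((m:ℚ)+1+j)^2 - ((m:ℚ)+1)^3) * (c j)^2) = V (m+2) - V 0 := by
    rw [← Finset.sum_range_sub V (m+2)]
    exact Finset.sum_congr rfl (fun j _ => (key j).symm)
  have expand : ∀ j : ℕ, (2*(2*(m:ℚ)+3)*((m:ℚ)+1+j)^2 - ((m:ℚ)+1)^3) * (c j)^2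
      = 2*(2*(m:ℚ)+3)*(((m:ℚ)+1)^2*(d j)^2) - ((m:ℚ)+1)^3*(c j)^2 := by
    intro j
    linear_combination (2*(2*(m:ℚ)+3)*(((m:ℚ)+1+j)*c j + ((m:ℚ)+1)*d j)) * hconv j
  have sum1 : ∑ j ∈ range (m+2), (d j)^2 = UU (m+1) := by
    simp only [UU, hd]
  have sum2 : ∑ j ∈ range (m+2), (c j)^2 = UU m + (c (m+1))^2 := by
    rw [Finset.sum_range_succ]
    simp only [UU, hc]
  have E : 2*(2*(m:ℚ)+3)*(((m:ℚ)+1)^2* UU (m+1)) - ((m:ℚ)+1)^3*(UU m + (c (m+1))^2)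
      = V (m+2) - V 0 := by
    rw [← tele, Finset.sum_congr rfl (fun j _ => expand j), Finset.sum_sub_distrib]
    have hA : ∑ j ∈ range (m+2), 2*(2*(m:ℚ)+3)*(((m:ℚ)+1)^2*(d j)^2)
        = 2*(2*(m:ℚ)+3)*(((m:ℚ)+1)^2* UU (m+1)) := by
      rw [← Finset.mul_sum, ← Finset.mul_sum, sum1]
    have hB : ∑ j ∈ range (m+2), ((m:ℚ)+1)^3*(c j)^2 = ((m:ℚ)+1)^3*(UU m + (c (m+1))^2) := by
      rw [← Finset.mul_sum, sum2]
    rw [hA, hB]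
  have hV0 : V 0 = 0 := by simp [hV]
  have idx1 : m + (m+1) = 2*m+1 := by omega
  have idx2 : m + (m+2) = 2*m+2 := by omega
  have hX : c (m+1) = (((2*m+1).choose (m+1) : ℕ) : ℚ) := by simp only [hc, idx1]
  have hY : c (m+2) = (((2*m+2).choose (m+2) : ℕ) : ℚ) := by simp only [hc, idx2]
  set P : ℚ := (((2*m+2).choose (m+1) : ℕ) : ℚ) with hP
  have hc1 : 2 * c (m+1) = P := by
    have h := castB (2*m+1) m
    have hsymm : (2*m+1).choose m = (2*m+1).choose (m+1) := by
      have := Nat.choose_symm (n := 2*m+1) (k := m+1) (by omega)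
      have e : 2*m+1-(m+1) = m := by omega
      rw [e] at this
      exact this
    rw [hsymm] at h
    have hne : ((m:ℚ)+1) ≠ 0 := by positivity
    apply mul_left_cancel₀ hne
    rw [hX]
    push_cast at h ⊢
    linarith
  have hc2 : ((m:ℚ)+2) * c (m+2) = ((m:ℚ)+1) * P := by
    have h := castC (2*m+2) (m+1)
    rw [hY]
    push_cast at h ⊢
    linarith
  have hVm2 : V (m+2) = ((m:ℚ)+2)^2*(5*(m:ℚ)+7)*(c (m+2))^2 := by
    simp only [hV]; push_cast; ring
  have hne : ((m:ℚ)+1) ≠ 0 := by positivity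
  apply mul_left_cancel₀ (pow_ne_zero 2 hne)
  linear_combination 4*E + 4*hVm2 + (((m:ℚ)+1)^3*(2*c (m+1)+P))*hc1
    + (4*(5*(m:ℚ)+7)*(((m:ℚ)+2)*c (m+2)+((m:ℚ)+1)*P))*hc2 + 4*hV0

private lemma Lrec (n : ℕ) :
    2*(n:ℚ)^2*((2*(n:ℚ)+1)*(2*(n:ℚ)+2))^3 * LL (n+1)
      = 2*((n:ℚ)+1)^2*((2*(n:ℚ)+1)*(2*(n:ℚ)+2))^3 * LL n
        + ((n:ℚ)+1)^3 * (7*(n:ℚ)^7+29*(n:ℚ)^6+47*(n:ℚ)^5+37*(n:ℚ)^4+14*(n:ℚ)^3+2*(n:ℚ)^2)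
          * (((2*n+2).choose (n+1) : ℕ) : ℚ)^3 := by
  set N : ℚ := (n:ℚ) with hN
  set b : ℕ → ℚ := fun k => (((2*n+2).choose (n+1+k) : ℕ) : ℚ) with hbdef
  set a : ℕ → ℚ := fun k => (((2*n).choose (n+k) : ℕ) : ℚ) with hadef
  set H : ℕ → ℚ := fun k => (N+1+(k:ℚ))^3 * (
      (7*N^7+29*N^6+47*N^5+37*N^4+14*N^3+2*N^2)
    + (-21*N^6-66*N^5-75*N^4-36*N^3-6*N^2)*(k:ℚ)
    + (21*N^6+66*N^5+69*N^4+21*N^3-6*N^2-3*N)*(k:ℚ)^2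
    + (12*N^4+30*N^3+23*N^2+4*N-1)*(k:ℚ)^3
    + (-6*N^4-15*N^3-9*N^2+3*N+3)*(k:ℚ)^4
    + (-3*N^2-6*N-3)*(k:ℚ)^5
    + (N^2+2*N+1)*(k:ℚ)^6) * (b k)^3 with hHdef
  have hb : ∀ k : ℕ, (N+2+(k:ℚ)) * b (k+1) = (N+1-(k:ℚ)) * b k := by
    intro k
    have h := castC (2*n+2) (n+1+k)
    have e : b (k+1) = (((2*n+2).choose ((n+1+k)+1) : ℕ) : ℚ) := rfl
    rw [e]
    push_cast at h ⊢
    linarith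
  have hab : ∀ k : ℕ, (N+1+(k:ℚ)) * ((N+1-(k:ℚ)) * b k) = ((2*N+1)*(2*N+2)) * a k := by
    intro k
    have h1 := castB (2*n+1) (n+k)
    have h2 := castA (2*n) (n+k)
    have e : (n+k)+1 = n+1+k := by omega
    rw [e] at h1
    have e2 : ((2*n+1)+1 : ℕ) = 2*n+2 := by omega
    rw [e2] at h1
    push_cast at h1 h2 ⊢
    nlinarith [h1, h2]
  have key : ∀ k : ℕ,
      (2*N^2*((2*N+1)*(2*N+2))^3) * ((k:ℚ)^3*(b k)^3)
        = 2*(N+1)^2*((k:ℚ)^3*(((N+1+(k:ℚ))*(N+1-(k:ℚ)))^3*(b k)^3) ) + (H k - H (k+1)) := by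
    intro k
    have hcube : ((N+2+(k:ℚ)) * b (k+1))^3 = ((N+1-(k:ℚ)) * b k)^3 := by rw [hb k]
    simp only [hHdef]
    push_cast
    linear_combination (
      (7*N^7+29*N^6+47*N^5+37*N^4+14*N^3+2*N^2)
    + (-21*N^6-66*N^5-75*N^4-36*N^3-6*N^2)*((k:ℚ)+1)
    + (21*N^6+66*N^5+69*N^4+21*N^3-6*N^2-3*N)*((k:ℚ)+1)^2
    + (12*N^4+30*N^3+23*N^2+4*N-1)*((k:ℚ)+1)^3
    + (-6*N^4-15*N^3-9*N^2+3*N+3)*((k:ℚ)+1)^4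
    + (-3*N^2-6*N-3)*((k:ℚ)+1)^5
    + (N^2+2*N+1)*((k:ℚ)+1)^6) * hcube
  have hmid : ∀ k : ℕ, (k:ℚ)^3*(((N+1+(k:ℚ))*(N+1-(k:ℚ)))^3*(b k)^3)
      = ((2*N+1)*(2*N+2))^3 * ((k:ℚ)^3*(a k)^3) := by
    intro k
    have h := hab k
    linear_combination ((k:ℚ)^3*(((N+1+(k:ℚ))*((N+1-(k:ℚ))*b k))^2
      + ((N+1+(k:ℚ))*((N+1-(k:ℚ))*b k))*(((2*N+1)*(2*N+2))*a k)
      + (((2*N+1)*(2*N+2))*a k)^2)) * h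
  have total : ∑ k ∈ range (n+2), ((2*N^2*((2*N+1)*(2*N+2))^3) * ((k:ℚ)^3*(b k)^3))
      = ∑ k ∈ range (n+2), (2*(N+1)^2*((k:ℚ)^3*(((N+1+(k:ℚ))*(N+1-(k:ℚ)))^3*(b k)^3))
        + (H k - H (k+1))) := Finset.sum_congr rfl (fun k _ => key k)
  have hsum1 : LL (n+1) = ∑ k ∈ range (n+2), ((k:ℚ)^3*(b k)^3) := by
    apply Finset.sum_congr rfl
    intro k _
    have e : 2*(n+1) = 2*n+2 := by omega
    simp only [hbdef, e]
  have hsum2 : ∑ k ∈ range (n+2), ((k:ℚ)^3*(a k)^3) = LL n := by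
    rw [Finset.sum_range_succ]
    have ha0 : a (n+1) = 0 := by
      simp only [hadef]
      rw [Nat.choose_eq_zero_of_lt (by omega)]
      simp
    rw [ha0]
    simp only [LL, hadef]
    ring
  have hmidsum : ∑ k ∈ range (n+2), (2*(N+1)^2*((k:ℚ)^3*(((N+1+(k:ℚ))*(N+1-(k:ℚ)))^3*(b k)^3)))
      = 2*(N+1)^2*(((2*N+1)*(2*N+2))^3 * LL n) := by
    rw [← Finset.mul_sum]
    congr 1
    rw [Finset.sum_congr rfl (fun k _ => hmid k), ← Finset.mul_sum, hsum2]
  have htele : ∑ k ∈ range (n+2), (H k - H (k+1)) = H 0 - H (n+2) :=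
    Finset.sum_range_sub' H (n+2)
  have hHend : H (n+2) = 0 := by
    have hb0 : b (n+2) = 0 := by
      simp only [hbdef]
      rw [Nat.choose_eq_zero_of_lt (by omega)]
      simp
    simp only [hHdef, hb0]
    ring
  have hH0 : H 0 = (N+1)^3 * (7*N^7+29*N^6+47*N^5+37*N^4+14*N^3+2*N^2)
      * (((2*n+2).choose (n+1) : ℕ) : ℚ)^3 := by
    have hb0 : b 0 = (((2*n+2).choose (n+1) : ℕ) : ℚ) := rfl
    simp only [hHdef, hb0]
    push_cast
    ring
  have final := total
  rw [← Finset.mul_sum, ← hsum1, Finset.sum_add_distrib, hmidsum, htele, hHend, hH0] at final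
  linarith [final]

set_option maxHeartbeats 4000000 in
private lemma Mred (m : ℕ) : 16 * LL (m+1)
    = 12*((m:ℚ)+1)^3*(((2*m+2).choose (m+1) : ℕ) : ℚ) * UU m
      - ((m:ℚ)+1)^3*(((2*m+2).choose (m+1) : ℕ) : ℚ)^3 := by
  induction m with
  | zero =>
      simp only [LL, UU]
      norm_num [Finset.sum_range_succ]
  | succ m IH =>
      set M : ℚ := (m:ℚ) with hM
      set P : ℚ := (((2*m+2).choose (m+1) : ℕ) : ℚ) with hP
      set U : ℚ := UU m with hU0
      set U1 : ℚ := UU (m+1) with hU1def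
      have e1 : 2*(m+1)+2 = 2*m+4 := by omega
      have e2 : (m+1)+1 = m+2 := by omega
      set D : ℚ := (((2*m+4).choose (m+2) : ℕ) : ℚ) with hD0
      rw [show (2*(m+1)+2) = 2*m+4 from e1, show ((m+1)+1) = m+2 from e2]
      have ems : ((m+1:ℕ):ℚ) = M+1 := by push_cast; ring
      rw [ems, show M+1+1 = M+2 from by ring, ← hD0]
      have hU := Urec m
      have hL := Lrec (m+1)
      have eL1 : (2*(m+1)+2) = 2*m+4 := e1
      rw [eL1, e2] at hL
      push_cast at hL hU
      have hQ1 := castB (2*m+3) (m+1)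
      have hQ2 := castA (2*m+2) (m+1)
      have eQ : (2*m+3)+1 = 2*m+4 := by omega
      rw [eQ, e2] at hQ1
      push_cast at hQ1 hQ2
      have hD : (M+2)^2 * D = (2*M+3)*(2*M+4)*P := by nlinarith [hQ1, hQ2]
      have hm1 : (M+1) ≠ 0 := by positivity
      have hm2 : (M+2) ≠ 0 := by positivity
      have h2m3 : (2*M+3) ≠ 0 := by positivity
      have h2m4 : (2*M+4) ≠ 0 := by positivity
      have hcst : ((2*(M+1)+1)*(2*(M+1)+2)) ≠ 0 := by positivity
      have hDval : D = (2*M+3)*(2*M+4)*P/(M+2)^2 := by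
        field_simp
        linarith [hD]
      have hU1 : U1 = (4*(M+1)*U + (21*M+29)*P^2)/(8*(2*M+3)) := by
        rw [eq_div_iff (by positivity)]
        linarith [hU]
      have hL1 : LL (m+1) = (12*(M+1)^3*P*U - (M+1)^3*P^3)/16 := by linarith [IH]
      have hL2 : LL (m+2) = (2*(M+2)^2*((2*(M+1)+1)*(2*(M+1)+2))^3 * LL (m+1)
          + (M+2)^3*(7*(M+1)^7+29*(M+1)^6+47*(M+1)^5+37*(M+1)^4+14*(M+1)^3+2*(M+1)^2)*D^3)
          /(2*(M+1)^2*((2*(M+1)+1)*(2*(M+1)+2))^3) := by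
        rw [eq_div_iff (by positivity)]
        linarith [hL]
      rw [hL2, hL1, hU1, hDval]
      have h2m3' : (2*(M+1)+1) ≠ 0 := by positivity
      have hm2' : (M+1+1) ≠ 0 := by positivity
      field_simp
      ring

theorem stmt_10 (n : ℕ) (hn : 1 ≤ n) :
    ∑ k ∈ range (n + 1), (k : ℚ) ^ 3 * ((2 * n).choose (n + k) : ℚ) ^ 3 =
      1 / 2 *
        ∑ j ∈ range n,
          3 * (n : ℚ) ^ 4 * ((2 * n).choose n : ℚ) * ((n + j).choose n : ℚ) ^ 2 /
            (((n : ℚ) + 2 * j) * ((n : ℚ) + 2 * j + 2)) := by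
  obtain ⟨m, rfl⟩ : ∃ m, n = m+1 := ⟨n-1, by omega⟩
  show LL (m+1) = _
  have eC : 2*(m+1) = 2*m+2 := by omega
  simp only [eC]
  set M : ℚ := (m:ℚ) with hM
  have ems : ((m+1:ℕ):ℚ) = M+1 := by push_cast; ring
  simp only [ems]
  set P : ℚ := (((2*m+2).choose (m+1) : ℕ) : ℚ) with hP
  set x : ℕ → ℚ := fun j => (((m+1+j).choose (m+1) : ℕ) : ℚ) with hxdef
  set y : ℕ → ℚ := fun j => (((m+1+j).choose m : ℕ) : ℚ) with hydef
  set W : ℕ → ℚ := fun j => 3*(M+1)^4 * P * (x j)^2 / (2*((M+1)+2*(j:ℚ))) with hWdef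
  have hx1 : ∀ j : ℕ, ((j:ℚ)+1) * x (j+1) = ((M+1)+(j:ℚ)+1) * x j := by
    intro j
    have h := castA (m+1+j) (m+1)
    have e : x (j+1) = ((((m+1+j)+1).choose (m+1) : ℕ) : ℚ) := rfl
    rw [e]
    push_cast at h ⊢
    linarith
  have hx2 : ∀ j : ℕ, ((j:ℚ)+1) * y j = (M+1) * x j := by
    intro j
    have h := castC (m+1+j) m
    have e : m+1 = m+1 := rfl
    push_cast at h ⊢
    linarith
  have step : ∀ j : ℕ, 3*(M+1)^4*P*(x j)^2/(((M+1)+2*(j:ℚ))*((M+1)+2*(j:ℚ)+2))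
      = (W j - W (j+1)) + 3*(M+1)^3/2*P*(y j)^2 := by
    intro j
    have hj1 : ((j:ℚ)+1) ≠ 0 := by positivity
    have hd1 : ((M+1)+2*(j:ℚ)) ≠ 0 := by positivity
    have hd2 : ((M+1)+2*(j:ℚ)+2) ≠ 0 := by positivity
    have hx1' : x (j+1) = ((M+1)+(j:ℚ)+1) * x j / ((j:ℚ)+1) := by
      rw [eq_div_iff hj1]; linarith [hx1 j]
    have hy' : y j = (M+1) * x j / ((j:ℚ)+1) := by
      rw [eq_div_iff hj1]; linarith [hx2 j]
    have hd3 : ((M+1)+2*((j:ℚ)+1)) ≠ 0 := by positivity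
    simp only [hWdef]
    rw [hx1', hy']
    push_cast
    field_simp
    ring
  have tele : ∑ j ∈ range (m+1), (W j - W (j+1)) = W 0 - W (m+1) :=
    Finset.sum_range_sub' W (m+1)
  have h2P : 2 * (((2*m+1).choose m : ℕ) : ℚ) = P := by
    have h := castB (2*m+1) m
    have e : (2*m+1)+1 = 2*m+2 := by omega
    rw [e] at h
    have hne : (M+1) ≠ 0 := by positivity
    apply mul_left_cancel₀ hne
    push_cast at h ⊢
    linarith
  have hsumy : ∑ j ∈ range (m+1), (y j)^2 = UU m - 1 + (P/2)^2 := by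
    set f : ℕ → ℚ := fun i => (((m+i).choose m : ℕ) : ℚ)^2 with hfdef
    have hyf : ∀ j : ℕ, (y j)^2 = f (j+1) := by
      intro j
      have e : m+1+j = m+(j+1) := by omega
      simp only [hydef, hfdef, e]
    have hs := Finset.sum_range_succ' f (m+1)
    have hUf : ∑ i ∈ range (m+1), f i = UU m := by
      apply Finset.sum_congr rfl
      intro i _
      have hsym : (m+i).choose m = (m+i).choose i := by
        have := Nat.choose_symm (n := m+i) (k := i) (by omega)
        have e : m+i-i = m := by omega
        rw [e] at this
        exact this
      simp only [hfdef, UU, hsym]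
    have hfm1 : f (m+1) = (P/2)^2 := by
      have e : m+(m+1) = 2*m+1 := by omega
      simp only [hfdef, e]
      have : (((2*m+1).choose m : ℕ) : ℚ) = P/2 := by
        rw [eq_div_iff (two_ne_zero)]; linarith [h2P]
      rw [this]
    have hf0 : f 0 = 1 := by
      have e : m+0 = m := by omega
      simp only [hfdef, e, Nat.choose_self]
      norm_num
    rw [Finset.sum_congr rfl (fun j _ => hyf j)]
    have hs2 : ∑ i ∈ range (m+2), f i = (∑ i ∈ range (m+1), f i) + f (m+1) :=
      Finset.sum_range_succ f (m+1)
    have : ∑ j ∈ range (m+1), f (j+1) = (∑ i ∈ range (m+2), f i) - f 0 := by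
      rw [hs]; ring
    rw [this, hs2, hUf, hfm1, hf0]
    ring
  have hx0 : x 0 = 1 := by
    have e : m+1+0 = m+1 := by omega
    simp only [hxdef, e, Nat.choose_self]
    norm_num
  have hxm1 : x (m+1) = P := by
    have e : m+1+(m+1) = 2*m+2 := by omega
    simp only [hxdef, e]
    rw [hP]
  have hW0 : W 0 = 3*(M+1)^3*P/2 := by
    have hne : (M+1) ≠ 0 := by positivity
    simp only [hWdef, hx0]
    push_cast
    rw [mul_zero, add_zero]
    field_simp
  have hWm1 : W (m+1) = (M+1)^3*P^3/2 := by
    have hne : (M+1) ≠ 0 := by positivity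
    simp only [hWdef, hxm1]
    push_cast
    rw [← hM]
    field_simp
    ring
  have main : ∑ j ∈ range (m+1),
      (3*(M+1)^4*P*(x j)^2/(((M+1)+2*(j:ℚ))*((M+1)+2*(j:ℚ)+2)))
      = (W 0 - W (m+1)) + 3*(M+1)^3/2*P*(UU m - 1 + (P/2)^2) := by
    rw [Finset.sum_congr rfl (fun j _ => step j), Finset.sum_add_distrib, tele,
      ← Finset.mul_sum, hsumy]
  have hM16 := Mred m
  have goalsum : ∑ j ∈ range (m+1),
      3 * (M+1) ^ 4 * P * (x j) ^ 2 / (((M+1) + 2 * (j:ℚ)) * ((M+1) + 2 * (j:ℚ) + 2))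
      = ∑ j ∈ range (m+1),
      3 * (M+1) ^ 4 * P * (x j) ^ 2 / (((M+1) + 2 * (j:ℚ)) * ((M+1) + 2 * (j:ℚ) + 2)) := rfl
  calc LL (m+1)
      = 1/2 * ((W 0 - W (m+1)) + 3*(M+1)^3/2*P*(UU m - 1 + (P/2)^2)) := by
        rw [hW0, hWm1]
        linarith [hM16]
    _ = 1/2 * ∑ j ∈ range (m+1),
        (3*(M+1)^4*P*(x j)^2/(((M+1)+2*(j:ℚ))*((M+1)+2*(j:ℚ)+2))) := by rw [main]
end

section
/- For a positive integer n and an indeterminate q, ∑_{k=0}^{n} qbinom(2n+1, n-k)·(qbinom(2n, n-k) − qbinom(2n, n-k-1))·q^{k(k+1)} = q^n·qbinom(2n,n)^2, where qbinom denotes the Gaussian (q-)binomial coefficient. -/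
/-!
Writing `[N, j]` for the Gaussian binomial, multiplying the two q-Pascal rules for `[N+1, j+1]`
by `[N, j+1]` and `[N, j]` and subtracting gives
`[N+1, j+1] ([N, j+1] - [N, j]) = q^(j+1) [N, j+1]^2 - q^(N-j) [N, j]^2`.
With `N = 2n` and `j = n-k-1` this makes the `k`-th summand equal to `w k - w (k+1)` for
`w k = q^(n+k^2) [2n, n-k]^2`, so the sum telescopes to `w 0 = q^n [2n, n]^2`.
-/

open Finset Polynomial

/-- Gaussian binomial coefficient as a polynomial in `q`, via the q-Pascal rule. -/
noncomputable def qb : ℕ → ℕ → Polynomial ℤ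
  | _, 0 => 1
  | 0, _ + 1 => 0
  | n + 1, k + 1 => qb n k + Polynomial.X ^ (k + 1) * qb n (k + 1)

/-- Gaussian binomial with integer arguments, zero outside `0 ≤ k ≤ n`. -/
noncomputable def qbinom (n k : ℤ) : Polynomial ℤ :=
  if 0 ≤ k ∧ k ≤ n then qb n.toNat k.toNat else 0

@[simp]
lemma qb_zero_right (n : ℕ) : qb n 0 = 1 := by cases n <;> rfl

lemma qb_succ_succ (n k : ℕ) : qb (n + 1) (k + 1) = qb n k + X ^ (k + 1) * qb n (k + 1) := rfl

lemma qb_eq_zero_of_lt {n k : ℕ} (h : n < k) : qb n k = 0 := by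
  induction n generalizing k with
  | zero => obtain ⟨k, rfl⟩ := Nat.exists_eq_succ_of_ne_zero (by omega : k ≠ 0); rfl
  | succ n ih =>
    obtain ⟨k, rfl⟩ := Nat.exists_eq_succ_of_ne_zero (by omega : k ≠ 0)
    rw [qb_succ_succ, ih (by omega), ih (by omega), mul_zero, add_zero]

@[simp]
lemma qb_self (n : ℕ) : qb n n = 1 := by
  induction n with
  | zero => rfl
  | succ n ih => rw [qb_succ_succ, ih, qb_eq_zero_of_lt (Nat.lt_succ_self n), mul_zero, add_zero]

lemma qb_succ_one (n : ℕ) : qb (n + 1) 1 = qb n 1 + X ^ n := by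
  induction n with
  | zero => simp [qb_eq_zero_of_lt]
  | succ n ih =>
    have h₁ := qb_succ_succ (n + 1) 0
    have h₂ := qb_succ_succ n 0
    simp only [qb_zero_right] at h₁ h₂
    linear_combination h₁ + X * ih - h₂

lemma qb_succ_succ' {n k : ℕ} (h : k ≤ n) :
    qb (n + 1) (k + 1) = qb n (k + 1) + X ^ (n - k) * qb n k := by
  induction n generalizing k with
  | zero =>
    obtain rfl : k = 0 := by omega
    simp [qb_eq_zero_of_lt]
  | succ n ih =>
    rcases k with _ | k
    · simpa using qb_succ_one (n + 1)
    rcases Nat.lt_or_ge k n with hk | hk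
    · obtain ⟨d, rfl⟩ := Nat.exists_eq_add_of_lt hk
      have h₁ := ih hk.le
      have h₂ := ih hk
      rw [show k + d + 1 - k = d + 1 by omega] at h₁
      rw [show k + d + 1 - (k + 1) = d by omega] at h₂
      rw [show k + d + 1 + 1 - (k + 1) = d + 1 by omega]
      linear_combination qb_succ_succ (k + d + 1 + 1) (k + 1) + h₁ + X ^ (k + 2) * h₂
        - qb_succ_succ (k + d + 1) (k + 1) - X ^ (d + 1) * qb_succ_succ (k + d + 1) k
    · obtain rfl : k = n := by omega
      rw [qb_self, qb_self, qb_eq_zero_of_lt (by omega), Nat.sub_self, pow_zero, one_mul, zero_add]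

lemma qb_succ_succ_mul_sub {n k : ℕ} (h : k ≤ n) :
    qb (n + 1) (k + 1) * (qb n (k + 1) - qb n k) =
      X ^ (k + 1) * qb n (k + 1) ^ 2 - X ^ (n - k) * qb n k ^ 2 := by
  linear_combination qb n (k + 1) * qb_succ_succ n k - qb n k * qb_succ_succ' h

lemma qbinom_eq_qb {n k : ℤ} {a b : ℕ} (hn : n = a) (hk : k = b) (h : b ≤ a) :
    qbinom n k = qb a b := by
  simp [qbinom, hn, hk, h]

lemma qbinom_of_neg (n : ℤ) {k : ℤ} (h : k < 0) : qbinom n k = 0 := by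
  simp [qbinom, not_le.mpr h]

noncomputable def qbinomSqWeight (n k : ℕ) : ℤ[X] :=
  X ^ (n + k ^ 2) * qbinom (2 * (n : ℤ)) ((n : ℤ) - k) ^ 2

lemma qbinomSqWeight_zero (n : ℕ) : qbinomSqWeight n 0 = X ^ n * qbinom (2 * (n : ℤ)) n ^ 2 := by
  simp [qbinomSqWeight]

lemma qbinomSqWeight_succ_self (n : ℕ) : qbinomSqWeight n (n + 1) = 0 := by
  simp [qbinomSqWeight, qbinom_of_neg]

lemma summand_eq_qbinomSqWeight_sub {n k : ℕ} (hk : k ≤ n) :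
    qbinom (2 * (n : ℤ) + 1) ((n : ℤ) - k) *
        (qbinom (2 * (n : ℤ)) ((n : ℤ) - k) - qbinom (2 * (n : ℤ)) ((n : ℤ) - k - 1)) *
        X ^ (k * (k + 1)) =
      qbinomSqWeight n k - qbinomSqWeight n (k + 1) := by
  obtain ⟨j, rfl⟩ := Nat.exists_eq_add_of_le hk
  unfold qbinomSqWeight
  rcases j with _ | j
  · rw [qbinom_eq_qb (a := 2 * k + 1) (b := 0) (by push_cast; ring) (by simp) (by omega),
      qbinom_eq_qb (a := 2 * k) (b := 0) (by push_cast; ring) (by simp) (by omega),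
      qbinom_of_neg _ (by simp), qbinom_of_neg _ (by simp)]
    simp only [qb_zero_right]
    ring
  · set n := k + (j + 1)
    rw [qbinom_eq_qb (a := 2 * n + 1) (b := j + 1) (by push_cast; ring) (by omega) (by omega),
      qbinom_eq_qb (a := 2 * n) (b := j + 1) (by push_cast; ring) (by omega) (by omega),
      qbinom_eq_qb (a := 2 * n) (b := j) (by push_cast; ring) (by omega) (by omega),
      qbinom_eq_qb (a := 2 * n) (b := j) (by push_cast; ring) (by omega) (by omega),
      qb_succ_succ_mul_sub (by omega), show 2 * n - j = n + k + 1 by omega]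
    ring

theorem stmt_12_general (n : ℕ) :
    ∑ k ∈ range (n + 1),
        qbinom (2 * (n : ℤ) + 1) ((n : ℤ) - k) *
          (qbinom (2 * (n : ℤ)) ((n : ℤ) - k) - qbinom (2 * (n : ℤ)) ((n : ℤ) - k - 1)) *
          Polynomial.X ^ (k * (k + 1)) =
      Polynomial.X ^ n * qbinom (2 * (n : ℤ)) n ^ 2 := by
  rw [sum_congr rfl fun k hk =>
      summand_eq_qbinomSqWeight_sub (Nat.lt_succ_iff.mp (mem_range.mp hk)),
    sum_range_sub', qbinomSqWeight_succ_self, sub_zero, qbinomSqWeight_zero]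

theorem stmt_12 (n : ℕ) (hn : 1 ≤ n) :
    ∑ k ∈ range (n + 1),
        qbinom (2 * (n : ℤ) + 1) ((n : ℤ) - k) *
          (qbinom (2 * (n : ℤ)) ((n : ℤ) - k) - qbinom (2 * (n : ℤ)) ((n : ℤ) - k - 1)) *
          Polynomial.X ^ (k * (k + 1)) =
      Polynomial.X ^ n * qbinom (2 * (n : ℤ)) n ^ 2 :=
  stmt_12_general n
end

section
/- For every non-negative integer n, ∑_{k=0}^{n} C(2n+1, n-k)·(C(2n, n-k) − C(2n, n-k-1)) = C(2n,n)^2. -/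
open Finset

lemma C_pascal (m j : ℤ) (hm : 0 ≤ m) : C (m + 1) j = C m j + C m (j - 1) := by
  unfold C
  split_ifs with h1 h2 h3 h2 h3 h3 h3 <;> try omega
  · -- all conditions true: j ≥ 1, j ≤ m
    obtain ⟨c, hc⟩ : ∃ c, j.toNat = c + 1 := ⟨j.toNat - 1, by omega⟩
    have hm1 : (m + 1).toNat = m.toNat + 1 := by omega
    have hj1 : (j - 1).toNat = c := by omega
    rw [hm1, hc, hj1, Nat.choose_succ_succ']
    push_cast
    ring
  · -- j = 0
    have hj : j = 0 := by omega
    subst hj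
    simp
  · -- j = m + 1
    have hj : j.toNat = (m + 1).toNat := by omega
    have hj1 : (j - 1).toNat = m.toNat := by omega
    have hm1 : (m + 1).toNat = m.toNat + 1 := by omega
    rw [hj, hj1, hm1, Nat.choose_self, Nat.choose_self]
    simp

theorem stmt_13 (n : ℕ) :
    ∑ k ∈ range (n + 1),
        C (2 * (n : ℤ) + 1) ((n : ℤ) - k) *
          (C (2 * (n : ℤ)) ((n : ℤ) - k) - C (2 * (n : ℤ)) ((n : ℤ) - k - 1)) =
      ((2 * n).choose n : ℤ) ^ 2 := by
  set f : ℕ → ℤ := fun k => C (2 * (n : ℤ)) ((n : ℤ) - k) ^ 2 with hf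
  have step : ∀ k ∈ range (n + 1),
      C (2 * (n : ℤ) + 1) ((n : ℤ) - k) *
        (C (2 * (n : ℤ)) ((n : ℤ) - k) - C (2 * (n : ℤ)) ((n : ℤ) - k - 1))
      = f k - f (k + 1) := by
    intro k _
    have h := C_pascal (2 * (n : ℤ)) ((n : ℤ) - k) (by positivity)
    have he : ((n : ℤ) - (k + 1 : ℕ)) = (n : ℤ) - k - 1 := by push_cast; ring
    simp only [hf, he]
    rw [h]
    ring
  rw [Finset.sum_congr rfl step, Finset.sum_range_sub' f (n + 1)]
  have h1 : f 0 = ((2 * n).choose n : ℤ) ^ 2 := by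
    simp only [hf]
    have : C (2 * (n : ℤ)) ((n : ℤ) - (0 : ℕ)) = ((2 * n).choose n : ℤ) := by
      unfold C
      rw [if_pos ⟨by omega, by omega⟩]
      norm_num
      congr 1
    rw [this]
  have h2 : f (n + 1) = 0 := by
    simp only [hf]
    have : C (2 * (n : ℤ)) ((n : ℤ) - (n + 1 : ℕ)) = 0 := by
      unfold C
      rw [if_neg (by push_cast; omega)]
    rw [this]
    ring
  rw [h1, h2, sub_zero]
end

section
/- For every non-negative integer n, ∑_{k=0}^{n} C(2n,k)·C(2n+1,k) + ∑_{k=n+1}^{2n+1} C(2n,k-1)·C(2n+1,k) = C(4n+1,2n) + C(2n,n)^2. -/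
open Finset

theorem stmt_14 (n : ℕ) :
    ∑ k ∈ range (n + 1), (2 * n).choose k * (2 * n + 1).choose k +
        ∑ k ∈ Icc (n + 1) (2 * n + 1), (2 * n).choose (k - 1) * (2 * n + 1).choose k =
      (4 * n + 1).choose (2 * n) + ((2 * n).choose n) ^ 2 := by
  set A := ∑ k ∈ range (n + 1), (2 * n).choose k * (2 * n + 1).choose k with hA
  set B := ∑ i ∈ range n, (2 * n).choose i * (2 * n + 1).choose (i + 1) with hB
  -- reflection: second sum = A
  have hrefl : ∑ k ∈ Icc (n + 1) (2 * n + 1),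
      (2 * n).choose (k - 1) * (2 * n + 1).choose k = A := by
    rw [hA]
    refine Finset.sum_nbij' (fun k => 2 * n + 1 - k) (fun k => 2 * n + 1 - k) ?_ ?_ ?_ ?_ ?_
    · intro a ha; simp only [mem_Icc] at ha; simp only [mem_range]; omega
    · intro a ha; simp only [mem_range] at ha; simp only [mem_Icc]; omega
    · intro a ha; simp only [mem_Icc] at ha; show 2 * n + 1 - (2 * n + 1 - a) = a; omega
    · intro a ha; simp only [mem_range] at ha; show 2 * n + 1 - (2 * n + 1 - a) = a; omega
    · intro a ha
      simp only [mem_Icc] at ha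
      show _ = (2 * n).choose (2 * n + 1 - a) * (2 * n + 1).choose (2 * n + 1 - a)
      have h1 : (2 * n + 1).choose a = (2 * n + 1).choose (2 * n + 1 - a) :=
        (Nat.choose_symm (by omega)).symm
      have h2 : (2 * n).choose (a - 1) = (2 * n).choose (2 * n - (a - 1)) :=
        (Nat.choose_symm (by omega)).symm
      have h3 : 2 * n - (a - 1) = 2 * n + 1 - a := by omega
      rw [h1, h2, h3]
  -- Vandermonde
  have hvan : ∑ k ∈ range (2 * n + 2), (2 * n).choose k * (2 * n + 1).choose k =
      (4 * n + 1).choose (2 * n) := by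
    have hsymm : (4 * n + 1).choose (2 * n) = (4 * n + 1).choose (2 * n + 1) := by
      have := Nat.choose_symm (show 2 * n + 1 ≤ 4 * n + 1 by omega)
      have h5 : 4 * n + 1 - (2 * n + 1) = 2 * n := by omega
      rw [h5] at this; exact this
    have h4 : (4 : ℕ) * n + 1 = 2 * n + (2 * n + 1) := by ring
    have hv := Nat.add_choose_eq (2 * n) (2 * n + 1) (2 * n + 1)
    rw [Finset.Nat.sum_antidiagonal_eq_sum_range_succ_mk] at hv
    rw [hsymm, h4, hv]
    refine Finset.sum_congr rfl fun k hk => ?_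
    simp only [mem_range] at hk
    congr 1
    exact (Nat.choose_symm (by omega)).symm
  -- tail sum equals B (reflection)
  have htail : ∑ k ∈ Icc (n + 1) (2 * n + 1),
      (2 * n).choose k * (2 * n + 1).choose k = B := by
    have step : ∑ k ∈ Icc (n + 1) (2 * n + 1), (2 * n).choose k * (2 * n + 1).choose k =
        ∑ j ∈ range (n + 1), (2 * n).choose (2 * n + 1 - j) * (2 * n + 1).choose j := by
      refine Finset.sum_nbij' (fun k => 2 * n + 1 - k) (fun k => 2 * n + 1 - k) ?_ ?_ ?_ ?_ ?_
      · intro a ha; simp only [mem_Icc] at ha; simp only [mem_range]; omega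
      · intro a ha; simp only [mem_range] at ha; simp only [mem_Icc]; omega
      · intro a ha; simp only [mem_Icc] at ha; show 2 * n + 1 - (2 * n + 1 - a) = a; omega
      · intro a ha; simp only [mem_range] at ha; show 2 * n + 1 - (2 * n + 1 - a) = a; omega
      · intro a ha
        simp only [mem_Icc] at ha
        show _ = (2 * n).choose (2 * n + 1 - (2 * n + 1 - a)) *
          (2 * n + 1).choose (2 * n + 1 - a)
        have h3 : 2 * n + 1 - (2 * n + 1 - a) = a := by omega
        rw [h3]
        congr 1
        exact (Nat.choose_symm (by omega)).symm
    rw [step, Finset.sum_range_succ', hB]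
    have h0 : (2 * n).choose (2 * n + 1 - 0) * (2 * n + 1).choose 0 = 0 := by
      simp [Nat.choose_eq_zero_of_lt (by omega : 2 * n < 2 * n + 1 - 0)]
    rw [h0, add_zero]
    refine Finset.sum_congr rfl fun i hi => ?_
    simp only [mem_range] at hi
    congr 1
    have h3 : 2 * n + 1 - (i + 1) = 2 * n - i := by omega
    rw [h3]
    exact Nat.choose_symm (by omega)
  -- telescoping: A = B + C(2n,n)^2, proven in ℤ
  have hkey : A = B + ((2 * n).choose n) ^ 2 := by
    have : (A : ℤ) = B + ((2 * n).choose n : ℤ) ^ 2 := by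
      rw [hA, hB]
      push_cast
      rw [Finset.sum_range_succ']
      have hpascal : ∀ i, ((2 * n + 1).choose (i + 1) : ℤ) =
          (2 * n).choose i + (2 * n).choose (i + 1) := by
        intro i
        rw [Nat.choose_succ_succ (2 * n) i]
        push_cast; ring
      have htel : ∑ i ∈ range n, (((2 * n).choose (i + 1) : ℤ) ^ 2 - ((2 * n).choose i : ℤ) ^ 2)
          = ((2 * n).choose n : ℤ) ^ 2 - ((2 * n).choose 0 : ℤ) ^ 2 :=
        Finset.sum_range_sub (fun i => ((2 * n).choose i : ℤ) ^ 2) n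
      have hdiff : ∑ i ∈ range n, (((2 * n).choose (i + 1) : ℤ) * (2 * n + 1).choose (i + 1)
            - ((2 * n).choose i : ℤ) * (2 * n + 1).choose (i + 1))
          = ((2 * n).choose n : ℤ) ^ 2 - 1 := by
        simp only [Nat.choose_zero_right, Nat.cast_one, one_pow] at htel
        rw [← htel]
        refine Finset.sum_congr rfl fun i hi => ?_
        rw [hpascal i]; ring
      have hsplit : ∑ i ∈ range n, (((2 * n).choose (i + 1) : ℤ) * (2 * n + 1).choose (i + 1))
          = ∑ i ∈ range n, (((2 * n).choose i : ℤ) * (2 * n + 1).choose (i + 1))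
            + (((2 * n).choose n : ℤ) ^ 2 - 1) := by
        rw [← hdiff, Finset.sum_sub_distrib]; ring
      rw [hsplit]
      simp
      ring
    exact_mod_cast this
  -- combine
  have hsplit2 : ∑ k ∈ range (2 * n + 2), (2 * n).choose k * (2 * n + 1).choose k
      = A + ∑ k ∈ Icc (n + 1) (2 * n + 1), (2 * n).choose k * (2 * n + 1).choose k := by
    have h := Finset.sum_Ico_consecutive (fun k => (2 * n).choose k * (2 * n + 1).choose k)
      (show 0 ≤ n + 1 by omega) (show n + 1 ≤ 2 * n + 2 by omega)
    rw [hA, Finset.range_eq_Ico, Finset.range_eq_Ico, ← Finset.Ico_add_one_right_eq_Icc]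
    exact h.symm
  rw [hrefl]
  rw [hsplit2, htail] at hvan
  omega
end

section
/- For non-negative integers n and k with 0 ≤ k ≤ n, C(2n+1,n-k)·(C(2n,n-k) − C(2n,n-k-1)) = C(2n,n+k)^2 − C(2n,n+k+1)^2. -/
theorem C_natCast_s15 (n k : ℕ) : C n k = n.choose k := by
  unfold C
  split_ifs with hk
  · simp
  · rw [Nat.choose_eq_zero_of_lt (by omega), Nat.cast_zero]

theorem C_of_neg {n k : ℤ} (hk : k < 0) : C n k = 0 :=
  if_neg fun h => by omega

theorem C_of_lt {n k : ℤ} (hk : n < k) : C n k = 0 :=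
  if_neg fun h => by omega

theorem C_symm {n : ℤ} (hn : 0 ≤ n) (k : ℤ) : C n (n - k) = C n k := by
  lift n to ℕ using hn
  rcases lt_or_ge k 0 with hk | hk
  · rw [C_of_neg hk, C_of_lt (by omega)]
  lift k to ℕ using hk
  rcases lt_or_ge n k with hnk | hkn
  · rw [C_of_neg (by omega), C_of_lt (by omega)]
  rw [← Nat.cast_sub hkn, C_natCast_s15, C_natCast_s15, Nat.choose_symm hkn]

theorem C_succ_succ {n : ℤ} (hn : 0 ≤ n) (k : ℤ) : C (n + 1) (k + 1) = C n k + C n (k + 1) := by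
  lift n to ℕ using hn
  rcases lt_trichotomy k (-1) with hk | rfl | hk
  · rw [C_of_neg (n := n + 1) (by omega), C_of_neg (n := n) (k := k) (by omega),
      C_of_neg (n := n) (by omega), add_zero]
  · rw [neg_add_cancel, C_of_neg (k := -1) (by norm_num), zero_add, ← Nat.cast_succ,
      ← Nat.cast_zero, C_natCast_s15, C_natCast_s15, Nat.choose_zero_right, Nat.choose_zero_right]
  lift k to ℕ using (by omega)
  rw [← Nat.cast_succ, ← Nat.cast_succ, C_natCast_s15, C_natCast_s15, C_natCast_s15, Nat.choose_succ_succ,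
    Nat.cast_add]

theorem stmt_15_general (n k : ℕ) :
    C (2 * (n : ℤ) + 1) ((n : ℤ) - k) *
        (C (2 * (n : ℤ)) ((n : ℤ) - k) - C (2 * (n : ℤ)) ((n : ℤ) - k - 1)) =
      C (2 * (n : ℤ)) ((n : ℤ) + k) ^ 2 - C (2 * (n : ℤ)) ((n : ℤ) + k + 1) ^ 2 := by
  have hN : (0 : ℤ) ≤ 2 * n := by positivity
  have hpascal : C (2 * (n : ℤ) + 1) ((n : ℤ) - k) =
      C (2 * (n : ℤ)) ((n : ℤ) + k) + C (2 * (n : ℤ)) ((n : ℤ) + k + 1) := by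
    rw [← C_succ_succ hN, ← C_symm (by omega)]
    ring_nf
  have hsymm : C (2 * (n : ℤ)) ((n : ℤ) - k) = C (2 * (n : ℤ)) ((n : ℤ) + k) := by
    rw [← C_symm hN]
    ring_nf
  have hsymm_succ : C (2 * (n : ℤ)) ((n : ℤ) - k - 1) = C (2 * (n : ℤ)) ((n : ℤ) + k + 1) := by
    rw [← C_symm hN]
    ring_nf
  rw [hpascal, hsymm, hsymm_succ]
  ring

theorem stmt_15 (n k : ℕ) (h : k ≤ n) :
    C (2 * (n : ℤ) + 1) ((n : ℤ) - k) *
        (C (2 * (n : ℤ)) ((n : ℤ) - k) - C (2 * (n : ℤ)) ((n : ℤ) - k - 1)) =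
      C (2 * (n : ℤ)) ((n : ℤ) + k) ^ 2 - C (2 * (n : ℤ)) ((n : ℤ) + k + 1) ^ 2 :=
  stmt_15_general n k
end

section
/- Define S_r(a,b,c) := ∑_{k=0}^{a} k^{2r+1}·C(a+b,a+k)·C(b+c,b+k)·C(c+a,c+k) for non-negative integers a,b,c and r ≥ 1, with a ≥ 1. Then S_r(a,b,c) = a²·S_{r−1}(a,b,c) − (a+b)·(a+c)·S_{r−1}(a−1,b,c). -/
open Finset

/-! The termwise identity
`(a² - k²) C(a+b, a+k) C(c+a, c+k) = (a+b)(a+c) C(a-1+b, a-1+k) C(c+a-1, c+k)`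
follows from `(a+k) C(a+b, a+k) = (a+b) C(a+b-1, a+k-1)` and
`(a-k) C(c+a, c+k) = (a+c) C(c+a-1, c+k)`. Multiplying by `k ^ (2r-1)` and summing over `k`
gives the recursion; the extra term `k = a` of the shorter sum vanishes. -/

/-- `S r a b c = ∑_{k=0}^{a} k^{2r+1}·C(a+b,a+k)·C(b+c,b+k)·C(c+a,c+k)`. -/
def S (r a b c : ℕ) : ℤ :=
  ∑ k ∈ range (a + 1),
    (k : ℤ) ^ (2 * r + 1) * ((a + b).choose (a + k) : ℤ) * ((b + c).choose (b + k) : ℤ) *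
      ((c + a).choose (c + k) : ℤ)

lemma cast_choose_succ_succ_mul (n j : ℕ) :
    ((n + 1).choose (j + 1) : ℤ) * (j + 1) = (n + 1) * n.choose j := by
  exact_mod_cast (Nat.add_one_mul_choose_eq n j).symm

/-- Over `ℤ` no restriction `j ≤ n + 1` is needed: beyond it both sides vanish. -/
lemma cast_choose_succ_mul_sub (n j : ℕ) :
    ((n + 1).choose j : ℤ) * (n + 1 - j) = (n + 1) * n.choose j := by
  rcases le_or_gt j (n + 1) with hj | hj
  · have h := congrArg (Nat.cast : ℕ → ℤ) (Nat.choose_mul_succ_eq n j)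
    push_cast [hj] at h
    linear_combination -h
  · rw [Nat.choose_eq_zero_of_lt hj, Nat.choose_eq_zero_of_lt (by omega)]
    simp

lemma sq_sub_sq_mul_choose_mul_choose (a b c k : ℕ) :
    (((a : ℤ) + 1) ^ 2 - (k : ℤ) ^ 2) * ((a + 1 + b).choose (a + 1 + k) : ℤ) *
        ((c + a + 1).choose (c + k) : ℤ) =
      ((a : ℤ) + 1 + b) * ((a : ℤ) + 1 + c) * ((a + b).choose (a + k) : ℤ) *
        ((c + a).choose (c + k) : ℤ) := by
  have hb := cast_choose_succ_succ_mul (a + b) (a + k)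
  have hc := cast_choose_succ_mul_sub (c + a) (c + k)
  rw [show a + b + 1 = a + 1 + b by omega, show a + k + 1 = a + 1 + k by omega] at hb
  push_cast at hb hc
  linear_combination ((a : ℤ) + 1 - k) * ((c + a + 1).choose (c + k) : ℤ) * hb +
    ((a : ℤ) + 1 + b) * ((a + b).choose (a + k) : ℤ) * hc

/-- The summands vanish for `k > a`, since then `C(c+a, c+k) = 0`. -/
lemma S_eq_sum_range (r a b c N : ℕ) (hN : a + 1 ≤ N) :
    S r a b c = ∑ k ∈ range N,
      (k : ℤ) ^ (2 * r + 1) * ((a + b).choose (a + k) : ℤ) * ((b + c).choose (b + k) : ℤ) *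
        ((c + a).choose (c + k) : ℤ) := by
  refine sum_subset (range_subset_range.mpr hN) fun k _ hka => ?_
  rw [mem_range, not_lt] at hka
  rw [Nat.choose_eq_zero_of_lt (by omega : c + a < c + k)]
  simp

theorem stmt_19 (r a b c : ℕ) (hr : 1 ≤ r) (ha : 1 ≤ a) :
    S r a b c =
      (a : ℤ) ^ 2 * S (r - 1) a b c - ((a : ℤ) + b) * ((a : ℤ) + c) * S (r - 1) (a - 1) b c := by
  obtain ⟨s, rfl⟩ : ∃ s, r = s + 1 := ⟨r - 1, by omega⟩
  obtain ⟨n, rfl⟩ : ∃ n, a = n + 1 := ⟨a - 1, by omega⟩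
  simp only [Nat.add_sub_cancel]
  rw [S_eq_sum_range _ _ _ _ (n + 2) le_rfl, S_eq_sum_range _ _ _ _ (n + 2) le_rfl,
    S_eq_sum_range _ _ _ _ (n + 2) (by omega), mul_sum, mul_sum, ← sum_sub_distrib]
  refine sum_congr rfl fun k _ => ?_
  have key := sq_sub_sq_mul_choose_mul_choose n b c k
  rw [show c + (n + 1) = c + n + 1 by omega]
  push_cast
  linear_combination (-(k : ℤ) ^ (2 * s + 1) * ((b + c).choose (b + k) : ℤ)) * key
end
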